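/- arXiv:math/0106206 — 4 statements merged into one kernel-verified Lean document; each statement's English description precedes it below -/
import Mathlib

section
/- Let C satisfy the Jacobi identity (Jacobi). Let Γ be the quotient of the free associative unital k-algebra on generators x_1,…,x_N by the two-sided ideal generated by the elements x_i x_j − Σ_{m,k} σ^{mk}_{ij} x_m x_k − Σ_k C^k_{ij} x_k (for all i,j). Then there exists a (unique) unital k-algebra homomorphism ρ : Γ → M_N(k) sending the class of x_i to the adjoint matrix ad(χ_i) whose (n,l)-entry is C^l_{ni} (with the matrix product convention (AB)_{n,l} = Σ_p A_{n,p} B_{p,l}); i.e., the adjoint matrices satisfy ad(χ_i)·ad(χ_j) − Σ_{m,k} σ^{mk}_{ij} ad(χ_m)·ad(χ_k) = Σ_k C^k_{ij} ad(χ_k), so every quantum Lie algebra possesses an adjoint representation. -/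
open scoped BigOperators

/-- The adjoint matrix `ad(χ_i)` whose `(n,l)`-entry is `C^l_{ni}`. -/
def adRep {K : Type*} [Field K] {N : ℕ}
    (C : Fin N → Fin N → Fin N → K) (i : Fin N) : Matrix (Fin N) (Fin N) K :=
  Matrix.of fun n l => C l n i

/-- The defining relations of the quantum Lie algebra:
`x_i x_j` is related to `Σ σ^{mk}_{ij} x_m x_k + Σ C^k_{ij} x_k`. -/
def qLieRel {K : Type*} [Field K] {N : ℕ}
    (σ : Fin N → Fin N → Fin N → Fin N → K)
    (C : Fin N → Fin N → Fin N → K) :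
    FreeAlgebra K (Fin N) → FreeAlgebra K (Fin N) → Prop :=
  fun a b => ∃ i j : Fin N,
    a = FreeAlgebra.ι K i * FreeAlgebra.ι K j ∧
    b = (∑ m : Fin N, ∑ l : Fin N,
          σ m l i j • (FreeAlgebra.ι K m * FreeAlgebra.ι K l)) +
        ∑ l : Fin N, C l i j • FreeAlgebra.ι K l

theorem adRep_rel
    {K : Type*} [Field K] {N : ℕ}
    (σ : Fin N → Fin N → Fin N → Fin N → K)
    (C : Fin N → Fin N → Fin N → K)
    (hJacobi : ∀ n i j l : Fin N,
      ∑ p : Fin N, C p n i * C l p j =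
        (∑ m : Fin N, ∑ kk : Fin N, ∑ p : Fin N, σ m kk i j * C p n m * C l p kk) +
        ∑ p : Fin N, C p i j * C l n p) (i j : Fin N) :
    adRep C i * adRep C j =
      (∑ m : Fin N, ∑ l : Fin N, σ m l i j • (adRep C m * adRep C l)) +
      ∑ l : Fin N, C l i j • adRep C l := by
  ext n l
  have h := hJacobi n i j l
  simp only [Matrix.add_apply, Matrix.sum_apply, Matrix.smul_apply, Matrix.mul_apply,
    adRep, Matrix.of_apply, smul_eq_mul] at *
  rw [h]
  simp only [Finset.mul_sum, mul_assoc]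

/-- if `C` satisfies the Jacobi identity, then the quantum Lie algebra
`Γ` (the quotient of the free algebra by the quantum Lie relations) admits a unique
unital algebra homomorphism to `M_N(K)` sending the class of `x_i` to `ad(χ_i)`;
i.e. the adjoint matrices satisfy the defining relations:
every quantum Lie algebra possesses an adjoint representation. -/
theorem adjoint_representation_exists
    {K : Type*} [Field K] {N : ℕ} (hN : 1 ≤ N)
    (σ : Fin N → Fin N → Fin N → Fin N → K)
    (C : Fin N → Fin N → Fin N → K)
    (hJacobi : ∀ n i j l : Fin N,
      ∑ p : Fin N, C p n i * C l p j =
        (∑ m : Fin N, ∑ kk : Fin N, ∑ p : Fin N, σ m kk i j * C p n m * C l p kk) +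
        ∑ p : Fin N, C p i j * C l n p) :
    (∀ i j : Fin N,
      adRep C i * adRep C j -
        (∑ m : Fin N, ∑ l : Fin N, σ m l i j • (adRep C m * adRep C l)) =
      ∑ l : Fin N, C l i j • adRep C l) ∧
    (∃! ρ : RingQuot (qLieRel σ C) →ₐ[K] Matrix (Fin N) (Fin N) K,
      ∀ i : Fin N,
        ρ (RingQuot.mkAlgHom K (qLieRel σ C) (FreeAlgebra.ι K i)) = adRep C i) := by
  constructor
  · intro i j
    rw [adRep_rel σ C hJacobi i j]
    abel
  · set f : FreeAlgebra K (Fin N) →ₐ[K] Matrix (Fin N) (Fin N) K :=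
      FreeAlgebra.lift K (adRep C) with hf
    have hw : ∀ ⦃a b⦄, qLieRel σ C a b → f a = f b := by
      rintro a b ⟨i, j, rfl, rfl⟩
      simp only [map_add, map_sum, map_smul, map_mul, hf, FreeAlgebra.lift_ι_apply]
      exact adRep_rel σ C hJacobi i j
    refine ⟨RingQuot.liftAlgHom K ⟨f, hw⟩, ?_, ?_⟩
    · intro i
      rw [RingQuot.liftAlgHom_mkAlgHom_apply, hf, FreeAlgebra.lift_ι_apply]
    · intro g hg
      refine RingQuot.liftAlgHom_unique K f hw g ?_
      apply FreeAlgebra.hom_ext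
      funext i
      simp only [Function.comp_apply, AlgHom.comp_apply, hf, FreeAlgebra.lift_ι_apply]
      exact hg i
end

section
/- Define Λ⁰ := k, and for n ≥ 1 define Λⁿ := V^{⊗n} / ker(A_{1→n}). Then the concatenation of tensors descends to quotients: for all m, l ≥ 0 there is a well-defined k-bilinear map ∧ : Λ^m × Λ^l → Λ^{m+l} with [x] ∧ [y] = [x ⊗ y] (i.e., if A_{1→m}(x) = 0 or A_{1→l}(y) = 0 then A_{1→(m+l)}(x ⊗ y) = 0), and the resulting product on the graded space ⊕_n Λⁿ is associative. -/
set_option linter.unreachableTactic false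
set_option linter.unusedTactic false


open scoped TensorProduct BigOperators
open PiTensorProduct

noncomputable section

variable {K : Type*} [Field K] {V : Type*} [AddCommGroup V] [Module K V]

/-- Cast between tensor powers of equal degree. -/
def castPow {m n : ℕ} (K : Type*) [Field K] (V : Type*) [AddCommGroup V] [Module K V]
    (h : m = n) : (⨂[K]^m V) ≃ₗ[K] (⨂[K]^n V) :=
  PiTensorProduct.reindex K (fun _ => V) (finCongr h)

/-- The canonical splitting `V^{⊗(m+l)} ≅ V^{⊗m} ⊗ V^{⊗l}`. -/
def splitPow (K : Type*) [Field K] (V : Type*) [AddCommGroup V] [Module K V] (m l : ℕ) :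
    (⨂[K]^(m + l) V) ≃ₗ[K] (⨂[K]^m V) ⊗[K] (⨂[K]^l V) :=
  (PiTensorProduct.reindex K (fun _ => V) finSumFinEquiv.symm).trans
    (PiTensorProduct.tmulEquiv K V).symm

/-- `V^{⊗1} ≅ V`. -/
def pow1Equiv (K : Type*) [Field K] (V : Type*) [AddCommGroup V] [Module K V] :
    (⨂[K]^1 V) ≃ₗ[K] V :=
  PiTensorProduct.subsingletonEquiv (0 : Fin 1)

/-- `V^{⊗2} ≅ V ⊗ V`. -/
def pow2Equiv (K : Type*) [Field K] (V : Type*) [AddCommGroup V] [Module K V] :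
    (⨂[K]^2 V) ≃ₗ[K] V ⊗[K] V :=
  (splitPow K V 1 1).trans (TensorProduct.congr (pow1Equiv K V) (pow1Equiv K V))

/-- `σ_{i,i+1}` acting on `V^{⊗n}` in the `i`-th and `(i+1)`-st tensor factors
(here `i` is 0-indexed: `braidAt σ n 0 = σ₁₂`, etc.); the identity if `i+2 > n`. -/
def braidAt (σ : V ⊗[K] V →ₗ[K] V ⊗[K] V) (n i : ℕ) :
    Module.End K (⨂[K]^n V) :=
  if h : i + 2 ≤ n then
    letI E : (⨂[K]^n V) ≃ₗ[K] (⨂[K]^i V) ⊗[K] ((V ⊗[K] V) ⊗[K] (⨂[K]^(n - (i+2)) V)) :=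
      (castPow K V (show n = i + (2 + (n - (i+2))) by omega)).trans
        ((splitPow K V i (2 + (n - (i+2)))).trans
          (TensorProduct.congr (LinearEquiv.refl K _)
            ((splitPow K V 2 (n - (i+2))).trans
              (TensorProduct.congr (pow2Equiv K V) (LinearEquiv.refl K _)))))
    E.symm.toLinearMap ∘ₗ
      (TensorProduct.map LinearMap.id (TensorProduct.map σ LinearMap.id)) ∘ₗ E.toLinearMap
  else 1

/-- Extension of an endomorphism of `V^{⊗m}` to `V^{⊗(m+l)}`, acting on the
first `m` tensor factors. -/
def extR (m l : ℕ) (X : Module.End K (⨂[K]^m V)) : Module.End K (⨂[K]^(m + l) V) :=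
  (splitPow K V m l).symm.toLinearMap ∘ₗ
    (TensorProduct.map X LinearMap.id) ∘ₗ (splitPow K V m l).toLinearMap

/-- Extension of an endomorphism of `V^{⊗l}` to `V^{⊗(m+l)}`, acting on the
last `l` tensor factors. -/
def extL (m l : ℕ) (Y : Module.End K (⨂[K]^l V)) : Module.End K (⨂[K]^(m + l) V) :=
  (splitPow K V m l).symm.toLinearMap ∘ₗ
    (TensorProduct.map LinearMap.id Y) ∘ₗ (splitPow K V m l).toLinearMap

/-- `X ⊗ id_V : V^{⊗(m+1)} → V^{⊗(m+1)}`. -/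
def extLast (m : ℕ) (X : Module.End K (⨂[K]^m V)) : Module.End K (⨂[K]^(m + 1) V) :=
  extR m 1 X

/-- `id_V ⊗ Y : V^{⊗(m+1)} → V^{⊗(m+1)}`. -/
def extFirst (m : ℕ) (Y : Module.End K (⨂[K]^m V)) : Module.End K (⨂[K]^(m + 1) V) :=
  (castPow K V (show 1 + m = m + 1 by omega)).toLinearMap ∘ₗ
    (extL 1 m Y) ∘ₗ (castPow K V (show m + 1 = 1 + m by omega)).toLinearMap

/-- `σ_{a→b} = σ_{a,a+1} σ_{a+1,a+2} ⋯ σ_{b−1,b}` on `V^{⊗n}` (1-indexed positions). -/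
def sigmaFwd (σ : V ⊗[K] V →ₗ[K] V ⊗[K] V) (n a b : ℕ) : Module.End K (⨂[K]^n V) :=
  (((List.range (b - a)).map fun t => braidAt σ n (a - 1 + t))).prod

/-- `σ_{b←a} = σ_{b−1,b} ⋯ σ_{a+1,a+2} σ_{a,a+1}` on `V^{⊗n}` (1-indexed positions). -/
def sigmaBwd (σ : V ⊗[K] V →ₗ[K] V ⊗[K] V) (n a b : ℕ) : Module.End K (⨂[K]^n V) :=
  ((((List.range (b - a)).map fun t => braidAt σ n (a - 1 + t))).reverse).prod

/-- The Woronowicz antisymmetrizers, defined by the recursion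
`A_{1→1} = id`, `A_{1→n} = (1 − Σ_{k=1}^{n−1} (−1)^{n−k−1} σ_{k→n}) (A_{1→n−1} ⊗ id)`. -/
def antisym (σ : V ⊗[K] V →ₗ[K] V ⊗[K] V) : (n : ℕ) → Module.End K (⨂[K]^n V)
  | 0 => 1
  | (m + 1) =>
      (1 - ∑ t ∈ Finset.range m,
          ((-1 : ℤ) ^ (m - t - 1)) • sigmaFwd σ (m + 1) (t + 1) (m + 1)) *
        extLast m (antisym σ m)

/-- Concatenation `V^{⊗m} × V^{⊗l} → V^{⊗(m+l)}`, `(x, y) ↦ x ⊗ y`. -/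
def concat (m l : ℕ) (x : ⨂[K]^m V) (y : ⨂[K]^l V) : ⨂[K]^(m + l) V :=
  (splitPow K V m l).symm (x ⊗ₜ[K] y)

/-- The braid Yang–Baxter equation `σ₁₂σ₂₃σ₁₂ = σ₂₃σ₁₂σ₂₃` on `V^{⊗3}`. -/
def BraidYBE (σ : V ⊗[K] V →ₗ[K] V ⊗[K] V) : Prop :=
  braidAt σ 3 0 * braidAt σ 3 1 * braidAt σ 3 0 =
    braidAt σ 3 1 * braidAt σ 3 0 * braidAt σ 3 1


section Chunk1
variable {K : Type*} [Field K] {V : Type*} [AddCommGroup V] [Module K V]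

lemma castPow_tprod {m n : ℕ} (h : m = n) (f : Fin m → V) :
    castPow K V h (tprod K f) = tprod K (fun i => f (finCongr h.symm i)) := by
  simp [castPow]

lemma castPow_rfl {m : ℕ} : castPow K V (rfl : m = m) = LinearEquiv.refl K _ := by
  simp [castPow, finCongr_refl, PiTensorProduct.reindex_refl]

lemma splitPow_tprod (m l : ℕ) (f : Fin (m + l) → V) :
    splitPow K V m l (tprod K f) =
      (tprod K fun i : Fin m => f (Fin.castAdd l i)) ⊗ₜ[K]
        (tprod K fun i : Fin l => f (Fin.natAdd m i)) := by
  simp [splitPow]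

lemma splitPow_symm_tprod (m l : ℕ) (f : Fin m → V) (g : Fin l → V) :
    (splitPow K V m l).symm (tprod K f ⊗ₜ[K] tprod K g) = tprod K (Fin.append f g) := by
  rw [LinearEquiv.symm_apply_eq, splitPow_tprod]
  congr 1
  · exact congrArg (PiTensorProduct.tprod K) (funext fun i => (Fin.append_left f g i).symm)
  · exact congrArg (PiTensorProduct.tprod K) (funext fun i => (Fin.append_right f g i).symm)

lemma pow1Equiv_tprod (f : Fin 1 → V) : pow1Equiv K V (tprod K f) = f 0 :=
  PiTensorProduct.subsingletonEquiv_apply_tprod _ f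

lemma pow2Equiv_tprod (f : Fin 2 → V) : pow2Equiv K V (tprod K f) = f 0 ⊗ₜ[K] f 1 := by
  simp only [pow2Equiv, LinearEquiv.trans_apply]
  rw [splitPow_tprod 1 1 f]
  simp only [TensorProduct.congr_tmul, pow1Equiv_tprod]
  congr 1 <;> exact congrArg f (by ext; simp)

end Chunk1
section Chunk2
variable {K : Type*} [Field K] {V : Type*} [AddCommGroup V] [Module K V]

def braidE (K : Type*) [Field K] (V : Type*) [AddCommGroup V] [Module K V]
    (n i : ℕ) (h : i + 2 ≤ n) :
    (⨂[K]^n V) ≃ₗ[K] (⨂[K]^i V) ⊗[K] ((V ⊗[K] V) ⊗[K] (⨂[K]^(n - (i+2)) V)) :=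
  (castPow K V (show n = i + (2 + (n - (i+2))) by omega)).trans
    ((splitPow K V i (2 + (n - (i+2)))).trans
      (TensorProduct.congr (LinearEquiv.refl K _)
        ((splitPow K V 2 (n - (i+2))).trans
          (TensorProduct.congr (pow2Equiv K V) (LinearEquiv.refl K _)))))

lemma braidAt_eq (σ : V ⊗[K] V →ₗ[K] V ⊗[K] V) {n i : ℕ} (h : i + 2 ≤ n) :
    braidAt σ n i = (braidE K V n i h).symm.toLinearMap ∘ₗ
      (TensorProduct.map LinearMap.id (TensorProduct.map σ LinearMap.id)) ∘ₗ
      (braidE K V n i h).toLinearMap := by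
  rw [braidAt, dif_pos h]; rfl

lemma braidAt_eq_one (σ : V ⊗[K] V →ₗ[K] V ⊗[K] V) {n i : ℕ} (h : ¬ i + 2 ≤ n) :
    braidAt σ n i = 1 := by
  rw [braidAt, dif_neg h]

lemma braidE_tprod {n i : ℕ} (h : i + 2 ≤ n) (f : Fin n → V) :
    braidE K V n i h (tprod K f) =
      (tprod K fun j : Fin i => f ⟨j.1, by omega⟩) ⊗ₜ[K]
        ((f ⟨i, by omega⟩ ⊗ₜ[K] f ⟨i+1, by omega⟩) ⊗ₜ[K]
          (tprod K fun j : Fin (n - (i+2)) => f ⟨i+2+j.1, by omega⟩)) := by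
  simp only [braidE, LinearEquiv.trans_apply, castPow_tprod]
  rw [splitPow_tprod i (2 + (n - (i+2)))]
  simp only [TensorProduct.congr_tmul, LinearEquiv.refl_apply]
  simp only [LinearEquiv.trans_apply]
  rw [splitPow_tprod 2 (n - (i+2))]
  simp only [TensorProduct.congr_tmul, LinearEquiv.refl_apply, pow2Equiv_tprod]
  exact congrArg₂ (TensorProduct.tmul K)
    (congrArg (PiTensorProduct.tprod K) (funext fun j => congrArg f (by ext; first | rfl | omega | (simp only [finCongr_apply, Fin.coe_cast, Fin.coe_castAdd, Fin.coe_natAdd, Fin.val_zero, Fin.val_one]; omega))))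
    (congrArg₂ (TensorProduct.tmul K)
      (congrArg₂ (TensorProduct.tmul K) (congrArg f (by ext; first | rfl | omega | (simp only [finCongr_apply, Fin.coe_cast, Fin.coe_castAdd, Fin.coe_natAdd, Fin.val_zero, Fin.val_one]; omega))) (congrArg f (by ext; first | rfl | omega | (simp only [finCongr_apply, Fin.coe_cast, Fin.coe_castAdd, Fin.coe_natAdd, Fin.val_zero, Fin.val_one]; omega))))
      (congrArg (PiTensorProduct.tprod K) (funext fun j => congrArg f (by ext; first | rfl | omega | (simp only [finCongr_apply, Fin.coe_cast, Fin.coe_castAdd, Fin.coe_natAdd, Fin.val_zero, Fin.val_one]; omega)))))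

end Chunk2
section Chunk3
variable {K : Type*} [Field K] {V : Type*} [AddCommGroup V] [Module K V]

lemma tprod_ext_end {n : ℕ} {F G : Module.End K (⨂[K]^n V)}
    (h : ∀ f : Fin n → V, F (tprod K f) = G (tprod K f)) : F = G := by
  apply LinearMap.ext; intro x
  refine PiTensorProduct.induction_on x ?_ ?_
  · intro r f; simp only [map_smul, h f]
  · intro a b ha hb; simp only [map_add, ha, hb]

def insMap (K : Type*) [Field K] {V : Type*} [AddCommGroup V] [Module K V]
    (n i : ℕ) (h : i + 2 ≤ n) (f : Fin n → V) : V ⊗[K] V →ₗ[K] ⨂[K]^n V :=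
  (braidE K V n i h).symm.toLinearMap ∘ₗ
    (TensorProduct.mk K (⨂[K]^i V) ((V ⊗[K] V) ⊗[K] (⨂[K]^(n-(i+2)) V))
        (tprod K fun j : Fin i => f ⟨j.1, by omega⟩)) ∘ₗ
    ((TensorProduct.mk K (V ⊗[K] V) (⨂[K]^(n-(i+2)) V)).flip
      (tprod K fun j : Fin (n - (i+2)) => f ⟨i+2+j.1, by omega⟩))

lemma braidAt_tprod (σ : V ⊗[K] V →ₗ[K] V ⊗[K] V) {n i : ℕ} (h : i + 2 ≤ n)
    (f : Fin n → V) :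
    braidAt σ n i (tprod K f) =
      insMap K n i h f (σ (f ⟨i, by omega⟩ ⊗ₜ[K] f ⟨i+1, by omega⟩)) := by
  rw [braidAt_eq σ h]
  simp only [LinearMap.comp_apply, LinearEquiv.coe_coe, braidE_tprod h f,
    TensorProduct.map_tmul, LinearMap.id_apply, insMap, TensorProduct.mk_apply,
    LinearMap.flip_apply]

lemma upd2_at0 {n i : ℕ} (f : Fin n → V) (h1 : i < n) (h2 : i + 1 < n) (v w : V) :
    Function.update (Function.update f ⟨i, h1⟩ v) ⟨i+1, h2⟩ w ⟨i, h1⟩ = v := by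
  rw [Function.update_of_ne (Fin.ne_of_val_ne (show i ≠ i + 1 by omega)), Function.update_self]

lemma upd2_at1 {n i : ℕ} (f : Fin n → V) (h1 : i < n) (h2 : i + 1 < n) (v w : V) :
    Function.update (Function.update f ⟨i, h1⟩ v) ⟨i+1, h2⟩ w ⟨i+1, h2⟩ = w := by
  rw [Function.update_self]

lemma upd2_ne {n i : ℕ} (f : Fin n → V) (h1 : i < n) (h2 : i + 1 < n) (v w : V)
    (j : Fin n) (hj0 : j.1 ≠ i) (hj1 : j.1 ≠ i + 1) :
    Function.update (Function.update f ⟨i, h1⟩ v) ⟨i+1, h2⟩ w j = f j := by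
  rw [Function.update_of_ne (Fin.ne_of_val_ne hj1), Function.update_of_ne (Fin.ne_of_val_ne hj0)]

lemma insMap_tmul {n i : ℕ} (h : i + 2 ≤ n) (f : Fin n → V) (v w : V) :
    insMap K n i h f (v ⊗ₜ[K] w) =
      tprod K (Function.update (Function.update f ⟨i, by omega⟩ v) ⟨i+1, by omega⟩ w) := by
  simp only [insMap, LinearMap.comp_apply, LinearMap.flip_apply, TensorProduct.mk_apply]
  refine (LinearEquiv.symm_apply_eq _).mpr ?_
  rw [braidE_tprod h]
  exact congrArg₂ (TensorProduct.tmul K)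
    (congrArg (PiTensorProduct.tprod K) (funext fun j =>
      (upd2_ne f _ _ v w _ (show (j:ℕ) ≠ i by omega) (show (j:ℕ) ≠ i + 1 by omega)).symm))
    (congrArg₂ (TensorProduct.tmul K)
      (congrArg₂ (TensorProduct.tmul K) (upd2_at0 f _ _ v w).symm (upd2_at1 f _ _ v w).symm)
      (congrArg (PiTensorProduct.tprod K) (funext fun j =>
        (upd2_ne f _ _ v w _ (show i + 2 + (j:ℕ) ≠ i by omega)
          (show i + 2 + (j:ℕ) ≠ i + 1 by omega)).symm)))

end Chunk3
section Chunk4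
set_option maxHeartbeats 1000000
variable {K : Type*} [Field K] {V : Type*} [AddCommGroup V] [Module K V]

lemma append_apply_lt {α : Type*} {m l : ℕ} (f : Fin m → α) (g : Fin l → α)
    (j : Fin (m + l)) (h : (j : ℕ) < m) : Fin.append f g j = f ⟨j.1, h⟩ := by
  conv_lhs => rw [show j = Fin.castAdd l ⟨j.1, h⟩ from by ext; rfl]
  rw [Fin.append_left]

lemma append_apply_ge {α : Type*} {m l : ℕ} (f : Fin m → α) (g : Fin l → α)
    (j : Fin (m + l)) (h : m ≤ (j : ℕ)) : Fin.append f g j = g ⟨j.1 - m, by omega⟩ := by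
  conv_lhs => rw [show j = Fin.natAdd m ⟨j.1 - m, by omega⟩ from by ext; simp; omega]
  rw [Fin.append_right]

lemma extR_apply {m l : ℕ} (X : Module.End K (⨂[K]^m V)) (x : ⨂[K]^(m+l) V) :
    extR m l X x = (splitPow K V m l).symm
      (TensorProduct.map X LinearMap.id (splitPow K V m l x)) := rfl

lemma extL_apply {m l : ℕ} (Y : Module.End K (⨂[K]^l V)) (x : ⨂[K]^(m+l) V) :
    extL m l Y x = (splitPow K V m l).symm
      (TensorProduct.map LinearMap.id Y (splitPow K V m l x)) := rfl

lemma extR_one {m l : ℕ} : extR m l (1 : Module.End K (⨂[K]^m V)) = 1 := by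
  apply LinearMap.ext; intro x
  have : TensorProduct.map (1 : Module.End K (⨂[K]^m V)) (LinearMap.id (M := ⨂[K]^l V))
      = LinearMap.id := TensorProduct.map_id
  simp [extR_apply, this]

lemma extL_one {m l : ℕ} : extL m l (1 : Module.End K (⨂[K]^l V)) = 1 := by
  apply LinearMap.ext; intro x
  have : TensorProduct.map (LinearMap.id (M := ⨂[K]^m V)) (1 : Module.End K (⨂[K]^l V))
      = LinearMap.id := TensorProduct.map_id
  simp [extL_apply, this]

lemma extR_mul {m l : ℕ} (X Y : Module.End K (⨂[K]^m V)) :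
    extR m l (X * Y) = extR m l X * extR m l Y := by
  apply LinearMap.ext; intro x
  have : TensorProduct.map (X * Y) (LinearMap.id (M := ⨂[K]^l V))
      = (TensorProduct.map X LinearMap.id) ∘ₗ (TensorProduct.map Y LinearMap.id) := by
    rw [← TensorProduct.map_comp]; rfl
  simp [extR_apply, this, Module.End.mul_apply]

lemma extL_mul {m l : ℕ} (X Y : Module.End K (⨂[K]^l V)) :
    extL m l (X * Y) = extL m l X * extL m l Y := by
  apply LinearMap.ext; intro x
  have : TensorProduct.map (LinearMap.id (M := ⨂[K]^m V)) (X * Y)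
      = (TensorProduct.map LinearMap.id X) ∘ₗ (TensorProduct.map LinearMap.id Y) := by
    rw [← TensorProduct.map_comp]; rfl
  simp [extL_apply, this, Module.End.mul_apply]

lemma extR_add {m l : ℕ} (X Y : Module.End K (⨂[K]^m V)) :
    extR m l (X + Y) = extR m l X + extR m l Y := by
  apply LinearMap.ext; intro x
  simp [extR_apply, TensorProduct.map_add_left]

lemma extL_add {m l : ℕ} (X Y : Module.End K (⨂[K]^l V)) :
    extL m l (X + Y) = extL m l X + extL m l Y := by
  apply LinearMap.ext; intro x
  simp [extL_apply, TensorProduct.map_add_right]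

def extRhom (m l : ℕ) : Module.End K (⨂[K]^m V) →+ Module.End K (⨂[K]^(m+l) V) :=
  AddMonoidHom.mk' (extR m l) extR_add

def extLhom (m l : ℕ) : Module.End K (⨂[K]^l V) →+ Module.End K (⨂[K]^(m+l) V) :=
  AddMonoidHom.mk' (extL m l) extL_add

lemma extR_zsmul {m l : ℕ} (c : ℤ) (X : Module.End K (⨂[K]^m V)) :
    extR m l (c • X) = c • extR m l X := map_zsmul (extRhom m l) c X

lemma extL_zsmul {m l : ℕ} (c : ℤ) (X : Module.End K (⨂[K]^l V)) :
    extL m l (c • X) = c • extL m l X := map_zsmul (extLhom m l) c X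

lemma extR_sub {m l : ℕ} (X Y : Module.End K (⨂[K]^m V)) :
    extR m l (X - Y) = extR m l X - extR m l Y := map_sub (extRhom m l) X Y

lemma extL_sub {m l : ℕ} (X Y : Module.End K (⨂[K]^l V)) :
    extL m l (X - Y) = extL m l X - extL m l Y := map_sub (extLhom m l) X Y

lemma extR_sum {m l : ℕ} {ι : Type*} (s : Finset ι) (F : ι → Module.End K (⨂[K]^m V)) :
    extR m l (∑ t ∈ s, F t) = ∑ t ∈ s, extR m l (F t) := map_sum (extRhom m l) F s

lemma extL_sum {m l : ℕ} {ι : Type*} (s : Finset ι) (F : ι → Module.End K (⨂[K]^l V)) :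
    extL m l (∑ t ∈ s, F t) = ∑ t ∈ s, extL m l (F t) := map_sum (extLhom m l) F s

lemma extR_extL_comm {m l : ℕ} (X : Module.End K (⨂[K]^m V)) (Y : Module.End K (⨂[K]^l V)) :
    extR m l X * extL m l Y = extL m l Y * extR m l X := by
  apply LinearMap.ext; intro x
  simp only [Module.End.mul_apply, extR_apply, extL_apply, LinearEquiv.apply_symm_apply]
  congr 1
  rw [← LinearMap.comp_apply, ← LinearMap.comp_apply, ← TensorProduct.map_comp,
    ← TensorProduct.map_comp, LinearMap.id_comp, LinearMap.comp_id, LinearMap.id_comp,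
    LinearMap.comp_id]

lemma concat_extR {m l : ℕ} (X : Module.End K (⨂[K]^m V)) (x : ⨂[K]^m V) (y : ⨂[K]^l V) :
    extR m l X (concat m l x y) = concat m l (X x) y := by
  simp [extR_apply, concat, LinearEquiv.apply_symm_apply]

lemma concat_extL {m l : ℕ} (Y : Module.End K (⨂[K]^l V)) (x : ⨂[K]^m V) (y : ⨂[K]^l V) :
    extL m l Y (concat m l x y) = concat m l x (Y y) := by
  simp [extL_apply, concat, LinearEquiv.apply_symm_apply]

end Chunk4
section Chunk5
set_option maxHeartbeats 1000000
variable {K : Type*} [Field K] {V : Type*} [AddCommGroup V] [Module K V]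

lemma E1index (q r i : ℕ) (h : i + 2 ≤ q) (f : Fin (q+r) → V) (v w : V) (j : Fin (q+r)) :
    Fin.append
      (Function.update (Function.update (fun t : Fin q => f (Fin.castAdd r t))
        ⟨i, by omega⟩ v) ⟨i+1, by omega⟩ w)
      (fun t : Fin r => f (Fin.natAdd q t)) j
    = Function.update (Function.update f ⟨i, by omega⟩ v) ⟨i+1, by omega⟩ w j := by
  by_cases hq : (j : ℕ) < q
  · rw [append_apply_lt _ _ _ hq]
    simp only [Function.update_apply, Fin.ext_iff]
    split_ifs <;> first
      | rfl
      | omega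
      | (exact congrArg f (by ext; simp))
  · rw [append_apply_ge _ _ _ (le_of_not_gt hq)]
    rw [upd2_ne f _ _ v w j (by omega) (by omega)]
    exact congrArg f (by ext; simp; omega)

lemma extR_braidAt (σ : V ⊗[K] V →ₗ[K] V ⊗[K] V) {q r i : ℕ} (h : i + 2 ≤ q) :
    extR q r (braidAt σ q i) = braidAt σ (q+r) i := by
  apply tprod_ext_end; intro f
  have h' : i + 2 ≤ q + r := by omega
  rw [extR_apply, splitPow_tprod, TensorProduct.map_tmul, LinearMap.id_apply,
    braidAt_tprod σ h, braidAt_tprod σ h']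
  have key : ((splitPow K V q r).symm.toLinearMap ∘ₗ
      ((TensorProduct.mk K (⨂[K]^q V) (⨂[K]^r V)).flip
        (tprod K fun t : Fin r => f (Fin.natAdd q t))) ∘ₗ
      insMap K q i h (fun t : Fin q => f (Fin.castAdd r t)))
      = insMap K (q+r) i h' f := by
    apply TensorProduct.ext'
    intro v w
    simp only [LinearMap.comp_apply, LinearMap.flip_apply, TensorProduct.mk_apply,
      insMap_tmul, LinearEquiv.coe_coe, splitPow_symm_tprod]
    exact congrArg (PiTensorProduct.tprod K) (funext fun j => E1index q r i h f v w j)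
  exact LinearMap.congr_fun key (σ (f ⟨i, by omega⟩ ⊗ₜ[K] f ⟨i+1, by omega⟩))

lemma E2index (p q i : ℕ) (h : i + 2 ≤ q) (f : Fin (p+q) → V) (v w : V) (j : Fin (p+q)) :
    Fin.append (fun t : Fin p => f (Fin.castAdd q t))
      (Function.update (Function.update (fun t : Fin q => f (Fin.natAdd p t))
        ⟨i, by omega⟩ v) ⟨i+1, by omega⟩ w) j
    = Function.update (Function.update f ⟨p+i, by omega⟩ v) ⟨p+i+1, by omega⟩ w j := by
  by_cases hp : (j : ℕ) < p
  · rw [append_apply_lt _ _ _ hp]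
    rw [upd2_ne f _ _ v w j (by omega) (by omega)]
    exact congrArg f (by ext; simp)
  · rw [append_apply_ge _ _ _ (le_of_not_gt hp)]
    simp only [Function.update_apply, Fin.ext_iff]
    split_ifs <;> first
      | rfl
      | omega
      | (exact congrArg f (by ext; simp; omega))

lemma extL_braidAt (σ : V ⊗[K] V →ₗ[K] V ⊗[K] V) (p : ℕ) {q i : ℕ} (h : i + 2 ≤ q) :
    extL p q (braidAt σ q i) = braidAt σ (p+q) (p+i) := by
  apply tprod_ext_end; intro f
  have h' : p + i + 2 ≤ p + q := by omega
  have h'' : (p + i) + 2 ≤ p + q := by omega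
  rw [extL_apply, splitPow_tprod, TensorProduct.map_tmul, LinearMap.id_apply,
    braidAt_tprod σ h, braidAt_tprod σ h'']
  have key : ((splitPow K V p q).symm.toLinearMap ∘ₗ
      (TensorProduct.mk K (⨂[K]^p V) (⨂[K]^q V)
        (tprod K fun t : Fin p => f (Fin.castAdd q t))) ∘ₗ
      insMap K q i h (fun t : Fin q => f (Fin.natAdd p t)))
      = insMap K (p+q) (p+i) h'' f := by
    apply TensorProduct.ext'
    intro v w
    simp only [LinearMap.comp_apply, TensorProduct.mk_apply,
      insMap_tmul, LinearEquiv.coe_coe, splitPow_symm_tprod]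
    exact congrArg (PiTensorProduct.tprod K) (funext fun j => E2index p q i h f v w j)
  exact LinearMap.congr_fun key (σ (f ⟨p+i, by omega⟩ ⊗ₜ[K] f ⟨p+i+1, by omega⟩))

lemma extL_braidAt' (σ : V ⊗[K] V →ₗ[K] V ⊗[K] V) (p : ℕ) (q i : ℕ) :
    extL p q (braidAt σ q i) = braidAt σ (p+q) (p+i) := by
  by_cases h : i + 2 ≤ q
  · exact extL_braidAt σ p h
  · rw [braidAt_eq_one σ h, braidAt_eq_one σ (by omega), extL_one]

def pcast {K : Type*} [Field K] {V : Type*} [AddCommGroup V] [Module K V] {p q : ℕ}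
    (h : p = q) (X : Module.End K (⨂[K]^p V)) : Module.End K (⨂[K]^q V) :=
  (castPow K V h).toLinearMap ∘ₗ X ∘ₗ (castPow K V h.symm).toLinearMap

lemma pcast_rfl {p : ℕ} (X : Module.End K (⨂[K]^p V)) : pcast rfl X = X := by
  apply LinearMap.ext; intro x
  simp [pcast, castPow_rfl]

lemma pcast_braidAt {p q : ℕ} (h : p = q) (σ : V ⊗[K] V →ₗ[K] V ⊗[K] V) (i : ℕ) :
    pcast h (braidAt σ p i) = braidAt σ q i := by
  subst h; exact pcast_rfl _

lemma pcast_mul {p q : ℕ} (h : p = q) (X Y : Module.End K (⨂[K]^p V)) :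
    pcast h (X * Y) = pcast h X * pcast h Y := by
  subst h; simp [pcast_rfl]

lemma braid_comm (σ : V ⊗[K] V →ₗ[K] V ⊗[K] V) {N i j : ℕ} (hij : i + 2 ≤ j) :
    braidAt σ N i * braidAt σ N j = braidAt σ N j * braidAt σ N i := by
  by_cases hj : j + 2 ≤ N
  · have hN : j + (N - j) = N := by omega
    have e1 : braidAt σ N i = pcast hN (extR j (N-j) (braidAt σ j i)) := by
      rw [extR_braidAt σ hij, pcast_braidAt]
    have e2 : braidAt σ N j = pcast hN (extL j (N-j) (braidAt σ (N-j) 0)) := by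
      rw [extL_braidAt' σ j (N-j) 0, pcast_braidAt, Nat.add_zero]
    rw [e1, e2, ← pcast_mul, ← pcast_mul, extR_extL_comm]
  · rw [braidAt_eq_one σ hj, mul_one, one_mul]

lemma braid_braid (σ : V ⊗[K] V →ₗ[K] V ⊗[K] V) (hYB : BraidYBE σ) {N i : ℕ}
    (h : i + 3 ≤ N) :
    braidAt σ N i * braidAt σ N (i+1) * braidAt σ N i =
      braidAt σ N (i+1) * braidAt σ N i * braidAt σ N (i+1) := by
  have hN : i + (3 + (N - (i+3))) = N := by omega
  have key : ∀ j, j + 2 ≤ 3 →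
      braidAt σ N (i + j) = pcast hN (extL i (3 + (N-(i+3))) (extR 3 (N-(i+3)) (braidAt σ 3 j))) := by
    intro j hj
    rw [extR_braidAt σ hj, extL_braidAt' σ i _ j, pcast_braidAt]
  have k0 : braidAt σ N i
      = pcast hN (extL i (3 + (N-(i+3))) (extR 3 (N-(i+3)) (braidAt σ 3 0))) := by
    have := key 0 (by omega); rwa [Nat.add_zero] at this
  have k1 := key 1 (by omega)
  have hyb : braidAt σ 3 0 * braidAt σ 3 1 * braidAt σ 3 0 =
      braidAt σ 3 1 * braidAt σ 3 0 * braidAt σ 3 1 := hYB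
  rw [k0, k1, ← pcast_mul, ← pcast_mul, ← pcast_mul, ← pcast_mul,
    ← extL_mul, ← extL_mul, ← extL_mul, ← extL_mul,
    ← extR_mul, ← extR_mul, ← extR_mul, ← extR_mul, hyb]

end Chunk5
section Chunk6
set_option maxHeartbeats 1000000
variable {A : Type*} [Ring A]

def fwdW (g : ℕ → A) (i len : ℕ) : A := ((List.range len).map (fun t => g (i+t))).prod

def bwdW (g : ℕ → A) (i len : ℕ) : A := (((List.range len).map (fun t => g (i+t))).reverse).prod

lemma fwdW_zero (g : ℕ → A) (i : ℕ) : fwdW g i 0 = 1 := rfl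

lemma bwdW_zero (g : ℕ → A) (i : ℕ) : bwdW g i 0 = 1 := rfl

lemma fwdW_succ_left (g : ℕ → A) (i len : ℕ) :
    fwdW g i (len+1) = g i * fwdW g (i+1) len := by
  rw [fwdW, List.range_succ_eq_map, List.map_cons, List.prod_cons, List.map_map]
  have h1 : ((fun t => g (i+t)) ∘ Nat.succ) = fun t => g (i+1+t) := by
    funext t; simp only [Function.comp_apply]; congr 1; omega
  rw [h1, Nat.add_zero]; rfl

lemma fwdW_one (g : ℕ → A) (i : ℕ) : fwdW g i 1 = g i := by
  have := fwdW_succ_left g i 0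
  simpa [fwdW_zero] using this

lemma fwdW_succ_right (g : ℕ → A) (i len : ℕ) :
    fwdW g i (len+1) = fwdW g i len * g (i+len) := by
  rw [fwdW, List.range_succ, List.map_append, List.prod_append]
  simp [fwdW]

lemma bwdW_succ_left (g : ℕ → A) (i len : ℕ) :
    bwdW g i (len+1) = g (i+len) * bwdW g i len := by
  rw [bwdW, List.range_succ, List.map_append, List.reverse_append, List.prod_append]
  simp [bwdW]

variable {g : ℕ → A} {N : ℕ}

lemma comm_g_fwd (hc : ∀ i j, i + 2 ≤ j → g i * g j = g j * g i) :
    ∀ (len i j : ℕ), j + 2 ≤ i → g j * fwdW g i len = fwdW g i len * g j := by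
  intro len
  induction len with
  | zero => intro i j _; simp [fwdW_zero]
  | succ len ih =>
    intro i j hj
    calc g j * fwdW g i (len+1) = (g j * g i) * fwdW g (i+1) len := by
          rw [fwdW_succ_left, mul_assoc]
      _ = g i * (g j * fwdW g (i+1) len) := by rw [hc j i hj, mul_assoc]
      _ = g i * (fwdW g (i+1) len * g j) := by rw [ih (i+1) j (by omega)]
      _ = fwdW g i (len+1) * g j := by rw [fwdW_succ_left, mul_assoc]

lemma comm_fwd_bwd (hc : ∀ i j, i + 2 ≤ j → g i * g j = g j * g i) :
    ∀ (q i j p : ℕ), j + q + 1 ≤ i → fwdW g i p * bwdW g j q = bwdW g j q * fwdW g i p := by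
  intro q
  induction q with
  | zero => intro i j p _; simp [bwdW_zero]
  | succ q ih =>
    intro i j p hq
    calc fwdW g i p * bwdW g j (q+1)
        = (fwdW g i p * g (j+q)) * bwdW g j q := by rw [bwdW_succ_left, ← mul_assoc]
      _ = g (j+q) * (fwdW g i p * bwdW g j q) := by
          rw [← comm_g_fwd hc p i (j+q) (by omega), mul_assoc]
      _ = g (j+q) * (bwdW g j q * fwdW g i p) := by rw [ih i j p (by omega)]
      _ = bwdW g j (q+1) * fwdW g i p := by rw [bwdW_succ_left, mul_assoc]

lemma swapW (hc : ∀ i j, i + 2 ≤ j → g i * g j = g j * g i)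
    (hb : ∀ i, i + 3 ≤ N → g i * g (i+1) * g i = g (i+1) * g i * g (i+1)) :
    ∀ (p i j : ℕ), i ≤ j → j + 2 ≤ i + p → j + 3 ≤ N →
      fwdW g i p * g j = g (j+1) * fwdW g i p := by
  have hb' : ∀ i, i + 3 ≤ N → ∀ x : A,
      g i * (g (i+1) * (g i * x)) = g (i+1) * (g i * (g (i+1) * x)) := by
    intro i h x
    rw [← mul_assoc, ← mul_assoc, hb i h, mul_assoc, mul_assoc]
  have hc' : ∀ i j, i + 2 ≤ j → ∀ x : A, g i * (g j * x) = g j * (g i * x) := by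
    intro i j h x
    rw [← mul_assoc, hc i j h, mul_assoc]
  intro p
  induction p with
  | zero => intro i j h1 h2 _; omega
  | succ p ih =>
    intro i j h1 h2 h3
    by_cases hij : i = j
    · subst hij
      obtain ⟨p', rfl⟩ : ∃ p', p = p' + 1 := ⟨p - 1, by omega⟩
      rw [fwdW_succ_left, fwdW_succ_left]
      calc g i * (g (i+1) * fwdW g (i+1+1) p') * g i
          = g i * (g (i+1) * (fwdW g (i+1+1) p' * g i)) := by
            rw [mul_assoc, mul_assoc]
        _ = g i * (g (i+1) * (g i * fwdW g (i+1+1) p')) := by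
            rw [← comm_g_fwd hc p' (i+1+1) i (by omega)]
        _ = g (i+1) * (g i * (g (i+1) * fwdW g (i+1+1) p')) := hb' i (by omega) _
    · have hij' : i < j := by omega
      calc fwdW g i (p+1) * g j
          = g i * (fwdW g (i+1) p * g j) := by rw [fwdW_succ_left, mul_assoc]
        _ = g i * (g (j+1) * fwdW g (i+1) p) := by rw [ih (i+1) j (by omega) (by omega) h3]
        _ = g (j+1) * (g i * fwdW g (i+1) p) := hc' i (j+1) (by omega) _
        _ = g (j+1) * fwdW g i (p+1) := by rw [fwdW_succ_left]

lemma crossW (hc : ∀ i j, i + 2 ≤ j → g i * g j = g j * g i)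
    (hb : ∀ i, i + 3 ≤ N → g i * g (i+1) * g i = g (i+1) * g i * g (i+1)) :
    ∀ (c s n a : ℕ), a ≤ c → c + 1 ≤ n → s + n + 1 ≤ N →
      fwdW g (s+a) (n-a) * bwdW g s c = bwdW g s (c+1) * fwdW g (s+a+1) (n-a-1) := by
  have base : ∀ (s n a : ℕ), a + 1 ≤ n → s + n + 1 ≤ N →
      fwdW g (s+a) (n-a) * bwdW g s a = bwdW g s (a+1) * fwdW g (s+a+1) (n-a-1) := by
    intro s n a h1 h2
    obtain ⟨d, hd⟩ : ∃ d, n - a = d + 1 := ⟨n - a - 1, by omega⟩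
    rw [hd, Nat.add_sub_cancel]
    calc fwdW g (s+a) (d+1) * bwdW g s a
        = g (s+a) * (fwdW g (s+a+1) d * bwdW g s a) := by rw [fwdW_succ_left, mul_assoc]
      _ = g (s+a) * (bwdW g s a * fwdW g (s+a+1) d) := by
          rw [comm_fwd_bwd hc a (s+a+1) s d (by omega)]
      _ = bwdW g s (a+1) * fwdW g (s+a+1) d := by rw [bwdW_succ_left, mul_assoc]
  intro c
  induction c with
  | zero =>
    intro s n a ha h1 h2
    have : a = 0 := by omega
    subst this
    exact base s n 0 h1 h2
  | succ c ih =>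
    intro s n a ha h1 h2
    by_cases hac : a = c + 1
    · subst hac
      exact base s n (c+1) h1 h2
    · have ha' : a ≤ c := by omega
      calc fwdW g (s+a) (n-a) * bwdW g s (c+1)
          = (fwdW g (s+a) (n-a) * g (s+c)) * bwdW g s c := by
            rw [bwdW_succ_left, ← mul_assoc]
        _ = g (s+c+1) * (fwdW g (s+a) (n-a) * bwdW g s c) := by
            rw [swapW hc hb (n-a) (s+a) (s+c) (by omega) (by omega) (by omega), mul_assoc]
        _ = g (s+c+1) * (bwdW g s (c+1) * fwdW g (s+a+1) (n-a-1)) := by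
            rw [ih s n a ha' (by omega) h2]
        _ = bwdW g s (c+1+1) * fwdW g (s+a+1) (n-a-1) := by
            rw [show s+c+1 = s+(c+1) by omega]
            conv_rhs => rw [bwdW_succ_left]
            rw [mul_assoc]
end Chunk6
section Chunk7
set_option maxHeartbeats 1000000
variable {A : Type*} [Ring A]

def CfacW (g : ℕ → A) (s n : ℕ) : A :=
  1 - ∑ t ∈ Finset.range n, ((-1:ℤ)^(n-t-1)) • fwdW g (s+t) (n-t)

def TfacW (g : ℕ → A) (s n : ℕ) : A :=
  ∑ k ∈ Finset.range (n+1), ((-1:ℤ)^k) • bwdW g s k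

def AshW (g : ℕ → A) (s : ℕ) : ℕ → A
  | 0 => 1
  | (n+1) => CfacW g s n * AshW g s n

variable {g : ℕ → A} {N : ℕ}

lemma sumKey (hc : ∀ i j, i + 2 ≤ j → g i * g j = g j * g i)
    (hb : ∀ i, i + 3 ≤ N → g i * g (i+1) * g i = g (i+1) * g i * g (i+1))
    (s n : ℕ) (hN : s + n + 2 ≤ N) :
    ∑ t ∈ Finset.range (n+1), ∑ k ∈ Finset.range (n+1),
        ((-1:ℤ)^(n-t+k)) • (fwdW g (s+t) (n+1-t) * bwdW g s k)
    = (∑ k ∈ Finset.range (n+2), ∑ t ∈ Finset.range n,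
        ((-1:ℤ)^(n-t-1+k)) • (bwdW g s k * fwdW g (s+t+1) (n-t)))
      + (-1:ℤ)^n • bwdW g s (n+1) := by
  rw [← Finset.sum_product' _ _ (fun a b =>
      ((-1:ℤ)^(n-a+b)) • (fwdW g (s+a) (n+1-a) * bwdW g s b)),
    ← Finset.sum_product' _ _ (fun a b =>
      ((-1:ℤ)^(n-b-1+a)) • (bwdW g s a * fwdW g (s+b+1) (n-b)))]
  have hmem : ((n, n) : ℕ × ℕ) ∈ Finset.range (n+1) ×ˢ Finset.range (n+1) := by
    simp [Finset.mem_product]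
  rw [Finset.sum_eq_sum_sdiff_singleton_add hmem]
  have hnn : ((-1:ℤ)^(n-n+n)) • (fwdW g (s+n) (n+1-n) * bwdW g s n)
      = (-1:ℤ)^n • bwdW g s (n+1) := by
    rw [show n-n+n = n by omega, show n+1-n = 1 by omega, fwdW_one, ← bwdW_succ_left]
  refine congrArg₂ (· + ·) ?_ hnn
  refine Finset.sum_nbij'
    (fun p => if p.2 < p.1 then (p.2, p.1 - 1) else (p.2 + 1, p.1))
    (fun p => if p.1 ≤ p.2 then (p.2 + 1, p.1) else (p.2, p.1 - 1)) ?_ ?_ ?_ ?_ ?_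
  · rintro ⟨t, k⟩ hp
    simp only [Finset.mem_sdiff, Finset.mem_product, Finset.mem_range,
      Finset.mem_singleton, Prod.mk.injEq, not_and] at hp
    obtain ⟨⟨h1, h2⟩, h3⟩ := hp
    dsimp only
    split_ifs with hlt <;>
      simp only [Finset.mem_product, Finset.mem_range] <;> constructor <;> omega
  · rintro ⟨k, t⟩ hp
    simp only [Finset.mem_product, Finset.mem_range] at hp
    obtain ⟨h1, h2⟩ := hp
    dsimp only
    split_ifs with hkt <;>
      simp only [Finset.mem_sdiff, Finset.mem_product, Finset.mem_range,
        Finset.mem_singleton, Prod.mk.injEq, not_and] <;> refine ⟨⟨?_, ?_⟩, ?_⟩ <;> omega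
  · rintro ⟨t, k⟩ hp
    simp only [Finset.mem_sdiff, Finset.mem_product, Finset.mem_range,
      Finset.mem_singleton, Prod.mk.injEq, not_and] at hp
    obtain ⟨⟨h1, h2⟩, h3⟩ := hp
    dsimp only
    by_cases hlt : k < t
    · rw [if_pos hlt]; dsimp only
      rw [if_pos (show k ≤ t - 1 by omega)]
      exact congrArg (fun a => (a, k)) (by omega)
    · rw [if_neg hlt]; dsimp only
      rw [if_neg (show ¬ k + 1 ≤ t by omega)]
      exact congrArg (Prod.mk t) (by omega)
  · rintro ⟨k, t⟩ hp
    simp only [Finset.mem_product, Finset.mem_range] at hp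
    obtain ⟨h1, h2⟩ := hp
    dsimp only
    by_cases hkt : k ≤ t
    · rw [if_pos hkt]; dsimp only
      rw [if_pos (show k < t + 1 by omega)]
      exact congrArg (Prod.mk k) (by omega)
    · rw [if_neg hkt]; dsimp only
      rw [if_neg (show ¬ k - 1 < t by omega)]
      exact congrArg (fun a => (a, t)) (by omega)
  · rintro ⟨t, k⟩ hp
    simp only [Finset.mem_sdiff, Finset.mem_product, Finset.mem_range,
      Finset.mem_singleton, Prod.mk.injEq, not_and] at hp
    obtain ⟨⟨h1, h2⟩, h3⟩ := hp
    dsimp only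
    split_ifs with hlt
    · rw [show n-(t-1)-1+k = n-t+k by omega, show s+(t-1)+1 = s+t by omega,
        show n-(t-1) = n+1-t by omega,
        ← comm_fwd_bwd hc k (s+t) s (n+1-t) (by omega)]
    · have htn : t < n := by omega
      rw [show n-t-1+(k+1) = n-t+k by omega,
        ← show n+1-t-1 = n-t by omega,
        ← crossW hc hb k s (n+1) t (by omega) (by omega) (by omega)]

lemma starW (hc : ∀ i j, i + 2 ≤ j → g i * g j = g j * g i)
    (hb : ∀ i, i + 3 ≤ N → g i * g (i+1) * g i = g (i+1) * g i * g (i+1))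
    (s n : ℕ) (hN : s + n + 2 ≤ N) :
    CfacW g s (n+1) * TfacW g s n = TfacW g s (n+1) * CfacW g (s+1) n := by
  have expandL : CfacW g s (n+1) * TfacW g s n
      = TfacW g s n - ∑ t ∈ Finset.range (n+1), ∑ k ∈ Finset.range (n+1),
          ((-1:ℤ)^(n-t+k)) • (fwdW g (s+t) (n+1-t) * bwdW g s k) := by
    rw [CfacW, sub_mul, one_mul, Finset.sum_mul]
    congr 1
    apply Finset.sum_congr rfl
    intro t ht
    simp only [Finset.mem_range] at ht
    rw [smul_mul_assoc, TfacW, Finset.mul_sum]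
    rw [Finset.smul_sum]
    apply Finset.sum_congr rfl
    intro k hk
    rw [mul_smul_comm, smul_smul, ← pow_add, show n+1-t-1 = n-t by omega]
  have expandR : TfacW g s (n+1) * CfacW g (s+1) n
      = TfacW g s (n+1) - ∑ k ∈ Finset.range (n+2), ∑ t ∈ Finset.range n,
          ((-1:ℤ)^(n-t-1+k)) • (bwdW g s k * fwdW g (s+t+1) (n-t)) := by
    rw [CfacW, mul_sub, mul_one, TfacW, Finset.sum_mul]
    congr 1
    apply Finset.sum_congr rfl
    intro k hk
    rw [smul_mul_assoc, Finset.mul_sum, Finset.smul_sum]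
    apply Finset.sum_congr rfl
    intro t ht
    rw [mul_smul_comm, smul_smul, ← pow_add, show s+1+t = s+t+1 by omega,
      show n-t-1+k = k+(n-t-1) by omega]
  rw [expandL, expandR, sumKey hc hb s n hN]
  rw [show TfacW g s (n+1) = TfacW g s n + ((-1:ℤ)^(n+1)) • bwdW g s (n+1) from by
    rw [TfacW, TfacW, Finset.sum_range_succ]]
  rw [show ((-1:ℤ)^(n+1)) • bwdW g s (n+1) = -(((-1:ℤ)^n) • bwdW g s (n+1)) from by
    rw [pow_succ, mul_comm, neg_one_mul, neg_smul]]
  abel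

lemma mirrorW (hc : ∀ i j, i + 2 ≤ j → g i * g j = g j * g i)
    (hb : ∀ i, i + 3 ≤ N → g i * g (i+1) * g i = g (i+1) * g i * g (i+1)) :
    ∀ (n s : ℕ), s + n + 1 ≤ N → AshW g s (n+1) = TfacW g s n * AshW g (s+1) n := by
  intro n
  induction n with
  | zero =>
    intro s _
    show CfacW g s 0 * AshW g s 0 = TfacW g s 0 * AshW g (s+1) 0
    simp [CfacW, TfacW, AshW, bwdW_zero]
  | succ n ih =>
    intro s h
    show CfacW g s (n+1) * AshW g s (n+1) = TfacW g s (n+1) * AshW g (s+1) (n+1)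
    rw [ih s (by omega), ← mul_assoc, starW hc hb s n (by omega), mul_assoc]
    rfl

lemma factorLW (hc : ∀ i j, i + 2 ≤ j → g i * g j = g j * g i)
    (hb : ∀ i, i + 3 ≤ N → g i * g (i+1) * g i = g (i+1) * g i * g (i+1)) :
    ∀ (m n : ℕ), m ≤ n → n ≤ N → ∃ B, AshW g 0 n = B * AshW g m (n-m) := by
  intro m
  induction m with
  | zero => intro n _ _; exact ⟨1, by rw [one_mul, Nat.sub_zero]⟩
  | succ m ih =>
    intro n hm hn
    obtain ⟨B, hB⟩ := ih n (by omega) hn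
    obtain ⟨d, hd⟩ : ∃ d, n - m = d + 1 := ⟨n - m - 1, by omega⟩
    rw [hd, mirrorW hc hb d m (by omega)] at hB
    exact ⟨B * TfacW g m d, by rw [hB, show n - (m+1) = d by omega, mul_assoc]⟩

lemma factorRW : ∀ (d m : ℕ), ∃ B, AshW g 0 (m+d) = B * AshW g 0 m := by
  intro d
  induction d with
  | zero => intro m; exact ⟨1, by rw [Nat.add_zero, one_mul]⟩
  | succ d ih =>
    intro m
    obtain ⟨B, hB⟩ := ih m
    exact ⟨CfacW g 0 (m+d) * B, by
      show CfacW g 0 (m+d) * AshW g 0 (m+d) = CfacW g 0 (m+d) * B * AshW g 0 m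
      rw [hB, mul_assoc]⟩

end Chunk7
section Chunk8
set_option maxHeartbeats 1000000
variable {K : Type*} [Field K] {V : Type*} [AddCommGroup V] [Module K V]

lemma extR_fwdW (σ : V ⊗[K] V →ₗ[K] V ⊗[K] V) (q r : ℕ) :
    ∀ (len i : ℕ), i + len + 1 ≤ q →
      extR q r (fwdW (braidAt σ q) i len) = fwdW (braidAt σ (q+r)) i len := by
  intro len
  induction len with
  | zero => intro i _; rw [fwdW_zero, fwdW_zero, extR_one]
  | succ len ih =>
    intro i h
    rw [fwdW_succ_left, fwdW_succ_left, extR_mul, extR_braidAt σ (by omega),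
      ih (i+1) (by omega)]

lemma extL_fwdW (σ : V ⊗[K] V →ₗ[K] V ⊗[K] V) (p q : ℕ) :
    ∀ (len i : ℕ),
      extL p q (fwdW (braidAt σ q) i len) = fwdW (braidAt σ (p+q)) (p+i) len := by
  intro len
  induction len with
  | zero => intro i; rw [fwdW_zero, fwdW_zero, extL_one]
  | succ len ih =>
    intro i
    rw [fwdW_succ_left, fwdW_succ_left, extL_mul, extL_braidAt' σ p q i, ih (i+1),
      show p+(i+1) = p+i+1 by omega]

lemma extR_CfacW (σ : V ⊗[K] V →ₗ[K] V ⊗[K] V) (q r s n : ℕ) (h : s + n + 1 ≤ q) :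
    extR q r (CfacW (braidAt σ q) s n) = CfacW (braidAt σ (q+r)) s n := by
  rw [CfacW, CfacW, extR_sub, extR_one, extR_sum]
  congr 1
  apply Finset.sum_congr rfl
  intro t ht
  simp only [Finset.mem_range] at ht
  rw [extR_zsmul, extR_fwdW σ q r (n-t) (s+t) (by omega)]

lemma extL_CfacW (σ : V ⊗[K] V →ₗ[K] V ⊗[K] V) (p q s n : ℕ) :
    extL p q (CfacW (braidAt σ q) s n) = CfacW (braidAt σ (p+q)) (p+s) n := by
  rw [CfacW, CfacW, extL_sub, extL_one, extL_sum]
  congr 1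
  apply Finset.sum_congr rfl
  intro t ht
  rw [extL_zsmul, extL_fwdW σ p q (n-t) (s+t), show p+(s+t) = p+s+t by omega]

lemma extR_AshW (σ : V ⊗[K] V →ₗ[K] V ⊗[K] V) (q r s : ℕ) :
    ∀ (n : ℕ), s + n ≤ q →
      extR q r (AshW (braidAt σ q) s n) = AshW (braidAt σ (q+r)) s n := by
  intro n
  induction n with
  | zero => intro _; exact extR_one
  | succ n ih =>
    intro h
    show extR q r (CfacW (braidAt σ q) s n * AshW (braidAt σ q) s n) = _
    rw [extR_mul, extR_CfacW σ q r s n (by omega), ih (by omega)]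
    rfl

lemma extL_AshW (σ : V ⊗[K] V →ₗ[K] V ⊗[K] V) (p q s : ℕ) :
    ∀ (n : ℕ),
      extL p q (AshW (braidAt σ q) s n) = AshW (braidAt σ (p+q)) (p+s) n := by
  intro n
  induction n with
  | zero => exact extL_one
  | succ n ih =>
    show extL p q (CfacW (braidAt σ q) s n * AshW (braidAt σ q) s n) = _
    rw [extL_mul, extL_CfacW σ p q s n, ih]
    rfl

lemma sigmaFwd_eq_fwdW (σ : V ⊗[K] V →ₗ[K] V ⊗[K] V) (n a b : ℕ) :
    sigmaFwd σ n a b = fwdW (braidAt σ n) (a-1) (b-a) := rfl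

lemma antisym_eq_AshW (σ : V ⊗[K] V →ₗ[K] V ⊗[K] V) :
    ∀ n, antisym σ n = AshW (braidAt σ n) 0 n := by
  intro n
  induction n with
  | zero => rfl
  | succ n ih =>
    show (1 - ∑ t ∈ Finset.range n,
          ((-1 : ℤ) ^ (n - t - 1)) • sigmaFwd σ (n + 1) (t + 1) (n + 1)) *
        extLast n (antisym σ n)
      = CfacW (braidAt σ (n+1)) 0 n * AshW (braidAt σ (n+1)) 0 n
    congr 1
    · rw [CfacW]
      congr 1
      apply Finset.sum_congr rfl
      intro t ht
      congr 1
      rw [sigmaFwd_eq_fwdW]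
      congr 1 <;> omega
    · rw [extLast, ih, extR_AshW σ n 1 0 n (by omega)]

lemma antisym_factorR (σ : V ⊗[K] V →ₗ[K] V ⊗[K] V) (m l : ℕ) :
    ∃ B, antisym σ (m+l) = B * extR m l (antisym σ m) := by
  obtain ⟨B, hB⟩ := factorRW (g := braidAt σ (m+l)) l m
  refine ⟨B, ?_⟩
  rw [antisym_eq_AshW σ (m+l), hB, antisym_eq_AshW σ m, extR_AshW σ m l 0 m (by omega)]

lemma antisym_factorL (σ : V ⊗[K] V →ₗ[K] V ⊗[K] V) (hYB : BraidYBE σ) (m l : ℕ) :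
    ∃ B, antisym σ (m+l) = B * extL m l (antisym σ l) := by
  have hc : ∀ i j, i + 2 ≤ j →
      braidAt σ (m+l) i * braidAt σ (m+l) j = braidAt σ (m+l) j * braidAt σ (m+l) i :=
    fun i j h => braid_comm σ h
  have hb : ∀ i, i + 3 ≤ m+l →
      braidAt σ (m+l) i * braidAt σ (m+l) (i+1) * braidAt σ (m+l) i =
        braidAt σ (m+l) (i+1) * braidAt σ (m+l) i * braidAt σ (m+l) (i+1) :=
    fun i h => braid_braid σ hYB h
  obtain ⟨B, hB⟩ := factorLW (N := m+l) hc hb m (m+l) (by omega) (by omega)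
  refine ⟨B, ?_⟩
  rw [antisym_eq_AshW σ (m+l), hB, antisym_eq_AshW σ l, extL_AshW σ m l 0 l,
    show m+l-m = l by omega, Nat.add_zero]

lemma concat_zero_left {m l : ℕ} (y : ⨂[K]^l V) : concat m l 0 y = 0 := by
  simp [concat, TensorProduct.zero_tmul]

lemma concat_zero_right {m l : ℕ} (x : ⨂[K]^m V) : concat m l x 0 = 0 := by
  simp [concat, TensorProduct.tmul_zero]

lemma antisym_concat_zero (σ : V ⊗[K] V →ₗ[K] V ⊗[K] V) (hYB : BraidYBE σ)
    (m l : ℕ) (x : ⨂[K]^m V) (y : ⨂[K]^l V)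
    (h : antisym σ m x = 0 ∨ antisym σ l y = 0) :
    antisym σ (m + l) (concat m l x y) = 0 := by
  rcases h with h | h
  · obtain ⟨B, hB⟩ := antisym_factorR σ m l
    rw [hB, Module.End.mul_apply, concat_extR, h, concat_zero_left, map_zero]
  · obtain ⟨B, hB⟩ := antisym_factorL σ hYB m l
    rw [hB, Module.End.mul_apply, concat_extL, h, concat_zero_right, map_zero]

end Chunk8
section Chunk9
set_option maxHeartbeats 1000000
variable {K : Type*} [Field K] {V : Type*} [AddCommGroup V] [Module K V]

lemma concat_add_left {m l : ℕ} (x x' : ⨂[K]^m V) (y : ⨂[K]^l V) :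
    concat m l (x + x') y = concat m l x y + concat m l x' y := by
  simp [concat, TensorProduct.add_tmul]

lemma concat_add_right {m l : ℕ} (x : ⨂[K]^m V) (y y' : ⨂[K]^l V) :
    concat m l x (y + y') = concat m l x y + concat m l x y' := by
  simp [concat, TensorProduct.tmul_add]

lemma concat_smul_left {m l : ℕ} (c : K) (x : ⨂[K]^m V) (y : ⨂[K]^l V) :
    concat m l (c • x) y = c • concat m l x y := by
  rw [concat, concat, ← TensorProduct.smul_tmul', map_smul]

lemma concat_smul_right {m l : ℕ} (c : K) (x : ⨂[K]^m V) (y : ⨂[K]^l V) :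
    concat m l x (c • y) = c • concat m l x y := by
  simp [concat, TensorProduct.tmul_smul]

lemma concat_tprod {m l : ℕ} (f : Fin m → V) (g : Fin l → V) :
    concat m l (tprod K f) (tprod K g) = tprod K (Fin.append f g) :=
  splitPow_symm_tprod m l f g

lemma assoc_index {α : Type*} (m l r : ℕ) (f : Fin m → α) (g : Fin l → α) (h : Fin r → α)
    (j : Fin (m + (l + r))) :
    Fin.append (Fin.append f g) h (finCongr (add_assoc m l r).symm j)
      = Fin.append f (Fin.append g h) j := by
  set j' : Fin (m + l + r) := finCongr (add_assoc m l r).symm j with hj'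
  have hval : (j' : ℕ) = (j : ℕ) := by simp [hj']
  by_cases h1 : (j : ℕ) < m
  · rw [append_apply_lt (Fin.append f g) h j' (show (j' : ℕ) < m + l by omega),
      append_apply_lt f g _ (show (j' : ℕ) < m by omega),
      append_apply_lt f (Fin.append g h) j h1]
    exact congrArg f (Fin.ext hval)
  · by_cases h2 : (j : ℕ) < m + l
    · rw [append_apply_lt (Fin.append f g) h j' (show (j' : ℕ) < m + l by omega),
        append_apply_ge f g _ (show m ≤ (j' : ℕ) by omega),
        append_apply_ge f (Fin.append g h) j (by omega),
        append_apply_lt g h _ (show (j : ℕ) - m < l by omega)]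
      exact congrArg g (Fin.ext (show (j' : ℕ) - m = (j : ℕ) - m by omega))
    · rw [append_apply_ge (Fin.append f g) h j' (show m + l ≤ (j' : ℕ) by omega),
        append_apply_ge f (Fin.append g h) j (by omega),
        append_apply_ge g h _ (show l ≤ (j : ℕ) - m by omega)]
      exact congrArg h (Fin.ext (show (j' : ℕ) - (m + l) = (j : ℕ) - m - l by omega))

lemma concat_assoc (m l r : ℕ) (x : ⨂[K]^m V) (y : ⨂[K]^l V) (z : ⨂[K]^r V) :
    castPow K V (add_assoc m l r) (concat (m + l) r (concat m l x y) z)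
      = concat m (l + r) x (concat l r y z) := by
  refine PiTensorProduct.induction_on x ?_ ?_
  · intro c f
    refine PiTensorProduct.induction_on y ?_ ?_
    · intro c' f'
      refine PiTensorProduct.induction_on z ?_ ?_
      · intro c'' f''
        simp only [concat_smul_left, concat_smul_right, map_smul]
        congr 1; congr 1; congr 1
        rw [concat_tprod, concat_tprod, concat_tprod, concat_tprod, castPow_tprod]
        exact congrArg (PiTensorProduct.tprod K)
          (funext fun j => assoc_index m l r f f' f'' j)
      · intro a b ha hb
        simp only [concat_add_right, concat_add_left, map_add, ha, hb]
    · intro a b ha hb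
      simp only [concat_add_right, concat_add_left, map_add, ha, hb]
  · intro a b ha hb
    simp only [concat_add_right, concat_add_left, map_add, ha, hb]

end Chunk9
section Chunk10
set_option maxHeartbeats 1000000
variable {K : Type*} [Field K] {V : Type*} [AddCommGroup V] [Module K V]

def concatBil (m l : ℕ) : (⨂[K]^m V) →ₗ[K] (⨂[K]^l V) →ₗ[K] (⨂[K]^(m+l) V) :=
  LinearMap.mk₂ K (concat m l) concat_add_left concat_smul_left
    concat_add_right concat_smul_right

def wedgeInner (σ : V ⊗[K] V →ₗ[K] V ⊗[K] V) (hYB : BraidYBE σ) (m l : ℕ)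
    (x : ⨂[K]^m V) :
    ((⨂[K]^l V) ⧸ LinearMap.ker (antisym σ l)) →ₗ[K]
      ((⨂[K]^(m+l) V) ⧸ LinearMap.ker (antisym σ (m+l))) :=
  Submodule.liftQ _ ((LinearMap.ker (antisym σ (m+l))).mkQ ∘ₗ concatBil m l x) (by
    intro y hy
    rw [LinearMap.mem_ker] at hy ⊢
    show (LinearMap.ker (antisym σ (m+l))).mkQ (concat m l x y) = 0
    rw [Submodule.mkQ_apply, Submodule.Quotient.mk_eq_zero, LinearMap.mem_ker]
    exact antisym_concat_zero σ hYB m l x y (Or.inr hy))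

lemma wedgeInner_mk (σ : V ⊗[K] V →ₗ[K] V ⊗[K] V) (hYB : BraidYBE σ) (m l : ℕ)
    (x : ⨂[K]^m V) (y : ⨂[K]^l V) :
    wedgeInner σ hYB m l x (Submodule.Quotient.mk y) =
      Submodule.Quotient.mk (concat m l x y) := by
  rw [wedgeInner, Submodule.liftQ_apply]
  rfl

def wedgeOuterPre (σ : V ⊗[K] V →ₗ[K] V ⊗[K] V) (hYB : BraidYBE σ) (m l : ℕ) :
    (⨂[K]^m V) →ₗ[K]
      (((⨂[K]^l V) ⧸ LinearMap.ker (antisym σ l)) →ₗ[K]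
        ((⨂[K]^(m+l) V) ⧸ LinearMap.ker (antisym σ (m+l)))) where
  toFun := wedgeInner σ hYB m l
  map_add' := by
    intro a b
    apply LinearMap.ext; intro q
    obtain ⟨y, rfl⟩ := Submodule.Quotient.mk_surjective _ q
    rw [LinearMap.add_apply, wedgeInner_mk, wedgeInner_mk, wedgeInner_mk,
      concat_add_left, Submodule.Quotient.mk_add]
  map_smul' := by
    intro c a
    apply LinearMap.ext; intro q
    obtain ⟨y, rfl⟩ := Submodule.Quotient.mk_surjective _ q
    rw [RingHom.id_apply, LinearMap.smul_apply, wedgeInner_mk, wedgeInner_mk,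
      concat_smul_left, Submodule.Quotient.mk_smul]

def wedgeMap (σ : V ⊗[K] V →ₗ[K] V ⊗[K] V) (hYB : BraidYBE σ) (m l : ℕ) :
    ((⨂[K]^m V) ⧸ LinearMap.ker (antisym σ m)) →ₗ[K]
      (((⨂[K]^l V) ⧸ LinearMap.ker (antisym σ l)) →ₗ[K]
        ((⨂[K]^(m+l) V) ⧸ LinearMap.ker (antisym σ (m+l)))) :=
  Submodule.liftQ _ (wedgeOuterPre σ hYB m l) (by
    intro x hx
    rw [LinearMap.mem_ker] at hx ⊢
    apply LinearMap.ext; intro q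
    obtain ⟨y, rfl⟩ := Submodule.Quotient.mk_surjective _ q
    show wedgeInner σ hYB m l x (Submodule.Quotient.mk y) = 0
    rw [wedgeInner_mk, Submodule.Quotient.mk_eq_zero, LinearMap.mem_ker]
    exact antisym_concat_zero σ hYB m l x y (Or.inl hx))

lemma wedgeMap_mk (σ : V ⊗[K] V →ₗ[K] V ⊗[K] V) (hYB : BraidYBE σ) (m l : ℕ)
    (x : ⨂[K]^m V) (y : ⨂[K]^l V) :
    wedgeMap σ hYB m l (Submodule.Quotient.mk x) (Submodule.Quotient.mk y) =
      Submodule.Quotient.mk (concat m l x y) := by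
  rw [wedgeMap, Submodule.liftQ_apply]
  exact wedgeInner_mk σ hYB m l x y

end Chunk10

/-- with `Λⁿ := V^{⊗n} / ker(A_{1→n})` (and `Λ⁰ = V^{⊗0} ≅ k`),
concatenation of tensors descends to a well-defined bilinear wedge product
`∧ : Λ^m × Λ^l → Λ^{m+l}` with `[x] ∧ [y] = [x ⊗ y]` (i.e. `A_{1→m}(x) = 0` or
`A_{1→l}(y) = 0` implies `A_{1→(m+l)}(x ⊗ y) = 0`), and the resulting product on
`⊕ₙ Λⁿ` is associative. -/
theorem wedge_well_defined_and_associative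
    {K : Type*} [Field K] {V : Type*} [AddCommGroup V] [Module K V]
    (σ : V ⊗[K] V →ₗ[K] V ⊗[K] V) (hYB : BraidYBE σ) :
    (∀ (m l : ℕ) (x : ⨂[K]^m V) (y : ⨂[K]^l V),
        (antisym σ m x = 0 ∨ antisym σ l y = 0) →
          antisym σ (m + l) (concat m l x y) = 0) ∧
    ∃ wedge : ∀ m l : ℕ,
        ((⨂[K]^m V) ⧸ LinearMap.ker (antisym σ m)) →ₗ[K]
          ((⨂[K]^l V) ⧸ LinearMap.ker (antisym σ l)) →ₗ[K]
            ((⨂[K]^(m + l) V) ⧸ LinearMap.ker (antisym σ (m + l))),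
      (∀ (m l : ℕ) (x : ⨂[K]^m V) (y : ⨂[K]^l V),
          wedge m l (Submodule.Quotient.mk x) (Submodule.Quotient.mk y) =
            Submodule.Quotient.mk (concat m l x y)) ∧
      (∀ (m l r : ℕ) (x : ⨂[K]^m V) (y : ⨂[K]^l V) (z : ⨂[K]^r V),
          (Submodule.Quotient.mk
              (castPow K V (add_assoc m l r) (concat (m + l) r (concat m l x y) z)) :
            (⨂[K]^(m + (l + r)) V) ⧸ LinearMap.ker (antisym σ (m + (l + r)))) =
            Submodule.Quotient.mk (concat m (l + r) x (concat l r y z))) := by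
  refine ⟨fun m l x y h => antisym_concat_zero σ hYB m l x y h,
    wedgeMap σ hYB, fun m l x y => wedgeMap_mk σ hYB m l x y, fun m l r x y z => ?_⟩
  exact congrArg Submodule.Quotient.mk (concat_assoc m l r x y z)

end
end

section
/- Let A be any associative unital k-algebra and X ∈ M_N(A). Then the quantum trace is invariant in the sense that Tr_{q1}(R̂ X₂ R̂⁻¹) = Tr_q(X) · Id_N and Tr_{q1}(R̂⁻¹ X₂ R̂) = Tr_q(X) · Id_N, as N×N matrices over A. -/
open scoped BigOperators

noncomputable section

/-- The Drinfeld–Jimbo R-matrix of `GL_q(N)`: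
`R^{i1 i2}_{j1 j2} = δ^{i1}_{j1} δ^{i2}_{j2} (1 + (q−1) δ^{i1 i2})
 + (q−q⁻¹) δ^{i1}_{j2} δ^{i2}_{j1} Θ_{i1 i2}` with `Θ_{ij} = 1` iff `i > j`. -/
def DJR {K : Type*} [Field K] (q : K) (N : ℕ) :
    Matrix (Fin N × Fin N) (Fin N × Fin N) K :=
  Matrix.of fun i j =>
    (if i.1 = j.1 ∧ i.2 = j.2 then 1 + (q - 1) * (if i.1 = i.2 then 1 else 0) else 0) +
      (q - q⁻¹) * (if i.1 = j.2 ∧ i.2 = j.1 ∧ i.2 < i.1 then 1 else 0)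

/-- `R̂ = P R`, i.e. `R̂^{i1 i2}_{j1 j2} = R^{i2 i1}_{j1 j2}`. -/
def DJRhat {K : Type*} [Field K] (q : K) (N : ℕ) :
    Matrix (Fin N × Fin N) (Fin N × Fin N) K :=
  Matrix.of fun i j => DJR q N (i.2, i.1) j

/-- `R̂` regarded as a scalar matrix over the algebra `A`. -/
def RhA {K : Type*} [Field K] (q : K) (N : ℕ) (A : Type*) [Ring A] [Algebra K A] :
    Matrix (Fin N × Fin N) (Fin N × Fin N) A :=
  (DJRhat q N).map (algebraMap K A)

/-- `R̂⁻¹ = R̂ − λ·Id` (by the Hecke condition) regarded as a scalar matrix over `A`. -/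
def RhInvA {K : Type*} [Field K] (q : K) (N : ℕ) (A : Type*) [Ring A] [Algebra K A] :
    Matrix (Fin N × Fin N) (Fin N × Fin N) A :=
  (DJRhat q N - (q - q⁻¹) • 1).map (algebraMap K A)

/-- `x₂ = 1 ⊗ x`, i.e. `(x₂)^{i1 i2}_{j1 j2} = δ^{i1}_{j1} x^{i2}_{j2}`. -/
def Mat2 {N : ℕ} {A : Type*} [Ring A] (x : Matrix (Fin N) (Fin N) A) :
    Matrix (Fin N × Fin N) (Fin N × Fin N) A :=
  Matrix.of fun i j => if i.1 = j.1 then x i.2 j.2 else 0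

/-- `x₁ = x ⊗ 1`, i.e. `(x₁)^{i1 i2}_{j1 j2} = x^{i1}_{j1} δ^{i2}_{j2}`. -/
def Mat1 {N : ℕ} {A : Type*} [Ring A] (x : Matrix (Fin N) (Fin N) A) :
    Matrix (Fin N × Fin N) (Fin N × Fin N) A :=
  Matrix.of fun i j => if i.2 = j.2 then x i.1 j.1 else 0

/-- The quantum trace `Tr_q(Y) = Σ_i q^{2(N−i)+1} Y^i_i`. -/
def TrqA {K : Type*} [Field K] (q : K) (N : ℕ) {A : Type*} [Ring A] [Algebra K A]
    (Y : Matrix (Fin N) (Fin N) A) : A :=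
  ∑ i : Fin N, algebraMap K A (q ^ (2 * (N - 1 - (i : ℕ)) + 1)) * Y i i

/-- The partial quantum trace over the first tensor factor. -/
def Trq1A {K : Type*} [Field K] (q : K) (N : ℕ) {A : Type*} [Ring A] [Algebra K A]
    (M : Matrix (Fin N × Fin N) (Fin N × Fin N) A) : Matrix (Fin N) (Fin N) A :=
  Matrix.of fun i2 j2 =>
    ∑ i1 : Fin N, algebraMap K A (q ^ (2 * (N - 1 - (i1 : ℕ)) + 1)) * M (i1, i2) (i1, j2)

/-- The ten commutation relations of the `GL_q(N)` differential algebra. -/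
def GLqRels {K : Type*} [Field K] (q : K) (N : ℕ) {A : Type*} [Ring A] [Algebra K A]
    (ω L J T : Matrix (Fin N) (Fin N) A) : Prop :=
  Mat2 ω * RhInvA q N A * Mat2 ω * RhA q N A
      = -(RhInvA q N A * Mat2 ω * RhInvA q N A * Mat2 ω) ∧
  Mat2 ω * RhA q N A * Mat2 L * RhA q N A = RhA q N A * Mat2 L * RhA q N A * Mat2 ω ∧
  Mat2 ω * RhA q N A * Mat2 J * RhA q N A + RhA q N A * Mat2 J * RhA q N A * Mat2 ω
      = -(RhA q N A) ∧
  Mat2 L * RhA q N A * Mat2 L * RhA q N A = RhA q N A * Mat2 L * RhA q N A * Mat2 L ∧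
  Mat2 J * RhA q N A * Mat2 L * RhA q N A = RhA q N A * Mat2 L * RhA q N A * Mat2 J ∧
  Mat2 J * RhA q N A * Mat2 J * RhA q N A = -(RhInvA q N A * Mat2 J * RhA q N A * Mat2 J) ∧
  RhA q N A * Mat1 T * Mat2 T = Mat1 T * Mat2 T * RhA q N A ∧
  Mat1 ω * Mat2 T = Mat2 T * RhInvA q N A * Mat2 ω * RhInvA q N A ∧
  Mat1 J * Mat2 T = Mat2 T * RhA q N A * Mat2 J * RhA q N A ∧
  Mat1 L * Mat2 T = Mat2 T * RhA q N A * Mat2 L * RhA q N A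



set_option maxHeartbeats 2000000 in
lemma middle1 {K : Type*} [Field K] (q : K) (hq : q ≠ 0) (N : ℕ) {A : Type*} [Ring A] [Algebra K A]
    (X : Matrix (Fin N) (Fin N) A) (i a b : Fin N) :
    (RhA q N A * Mat2 X * RhInvA q N A) (i,a) (i,b) =
      (if a = b then (1 + (q - q⁻¹) * q * (if i = a then 1 else 0)) • X i i else 0)
      + ((if i = a ∧ b ≤ a then -((q * (q - q⁻¹)) • X a b) else 0)
      + ((if i = b ∧ b < a then (q * (q - q⁻¹)) • X a b else 0)
      + (if b ≤ i ∧ i < a then -(((q - q⁻¹) * (q - q⁻¹)) • X a b) else 0))) := by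
  simp only [Matrix.mul_apply, RhA, RhInvA, Mat2, DJRhat, DJR, Matrix.map_apply,
    Matrix.of_apply, Matrix.sub_apply, Matrix.smul_apply, Matrix.one_apply, smul_eq_mul,
    Fintype.sum_prod_type, map_add, map_mul, map_sub, map_one, map_zero,
    apply_ite (algebraMap K A), mul_ite, ite_mul, mul_zero, zero_mul,
    Finset.sum_ite_eq, Finset.sum_ite_eq', Finset.mem_univ, if_true, ite_and,
    add_mul, mul_add, Finset.sum_add_distrib, mul_one, one_mul, Finset.sum_ite_irrel,
    Prod.mk.injEq, sub_mul, mul_sub, Finset.sum_sub_distrib, Finset.sum_const_zero]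
  simp only [← Algebra.commutes, ← Algebra.smul_def]
  split_ifs <;>
    first
      | (exfalso; simp only [Fin.lt_def, Fin.le_def, ← Fin.val_eq_val, not_le, not_lt] at *; omega)
      | (subst_vars; match_scalars <;> (first | ring1 | exact mul_inv_cancel₀ hq | (field_simp; try ring1)))
      

set_option maxHeartbeats 2000000 in
lemma middle2 {K : Type*} [Field K] (q : K) (hq : q ≠ 0) (N : ℕ) {A : Type*} [Ring A] [Algebra K A]
    (X : Matrix (Fin N) (Fin N) A) (i a b : Fin N) :
    (RhInvA q N A * Mat2 X * RhA q N A) (i,a) (i,b) =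
      (if a = b then (1 + (q - q⁻¹) * q * (if i = a then 1 else 0)) • X i i else 0)
      + ((if i = a ∧ a < b then (q * (q - q⁻¹)) • X a b else 0)
      + ((if i = b ∧ a ≤ b then -((q * (q - q⁻¹)) • X a b) else 0)
      + (if a ≤ i ∧ i < b then -(((q - q⁻¹) * (q - q⁻¹)) • X a b) else 0))) := by
  simp only [Matrix.mul_apply, RhA, RhInvA, Mat2, DJRhat, DJR, Matrix.map_apply,
    Matrix.of_apply, Matrix.sub_apply, Matrix.smul_apply, Matrix.one_apply, smul_eq_mul,
    Fintype.sum_prod_type, map_add, map_mul, map_sub, map_one, map_zero,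
    apply_ite (algebraMap K A), mul_ite, ite_mul, mul_zero, zero_mul,
    Finset.sum_ite_eq, Finset.sum_ite_eq', Finset.mem_univ, if_true, ite_and,
    add_mul, mul_add, Finset.sum_add_distrib, mul_one, one_mul, Finset.sum_ite_irrel,
    Prod.mk.injEq, sub_mul, mul_sub, Finset.sum_sub_distrib, Finset.sum_const_zero]
  simp only [← Algebra.commutes, ← Algebra.smul_def]
  split_ifs <;>
    first
      | (exfalso; simp only [Fin.lt_def, Fin.le_def, ← Fin.val_eq_val, not_le, not_lt] at *; omega)
      | (subst_vars; match_scalars <;> (first | ring1 | exact mul_inv_cancel₀ hq | (field_simp; try ring1)))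

lemma keyNat {K : Type*} [Field K] (q : K) (hq : q ≠ 0) (N : ℕ) :
    ∀ a, a ≤ N - 1 → ∀ b, b ≤ a →
      (q - q⁻¹) * ∑ n ∈ Finset.Ico b a, q ^ (2 * (N - 1 - n) + 1)
        = q * q ^ (2 * (N - 1 - b) + 1) - q * q ^ (2 * (N - 1 - a) + 1) := by
  intro a
  induction a with
  | zero => intro _ b hb; interval_cases b; simp
  | succ m ih =>
    intro hm b hb
    rcases Nat.lt_or_ge b (m+1) with h | h
    · have hbm : b ≤ m := Nat.lt_succ_iff.mp h
      rw [Finset.sum_Ico_succ_top hbm, mul_add, ih (le_trans (Nat.le_succ m) hm) b hbm]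
      have e1 : 2 * (N - 1 - m) + 1 = (2 * (N - 1 - (m+1)) + 1) + 2 := by omega
      rw [e1]
      have : q⁻¹ * q = 1 := inv_mul_cancel₀ hq
      ring_nf
      field_simp
    · have : b = m + 1 := le_antisymm hb h
      subst this
      simp

lemma keyFin {K : Type*} [Field K] (q : K) (hq : q ≠ 0) (N : ℕ) (a b : Fin N) (h : b < a) :
    (q - q⁻¹) * ∑ i : Fin N, (if b ≤ i ∧ i < a then q ^ (2 * (N - 1 - (i : ℕ)) + 1) else 0)
      = q * q ^ (2 * (N - 1 - (b : ℕ)) + 1) - q * q ^ (2 * (N - 1 - (a : ℕ)) + 1) := by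
  have h1 : ∑ i : Fin N, (if b ≤ i ∧ i < a then q ^ (2 * (N - 1 - (i : ℕ)) + 1) else 0)
      = ∑ n ∈ Finset.range N, (if (b : ℕ) ≤ n ∧ n < (a : ℕ) then q ^ (2 * (N - 1 - n) + 1) else 0) := by
    rw [← Fin.sum_univ_eq_sum_range
      (fun n => if (b : ℕ) ≤ n ∧ n < (a : ℕ) then q ^ (2 * (N - 1 - n) + 1) else 0) N]
    exact Finset.sum_congr rfl fun i _ => if_congr (and_congr Fin.le_def Fin.lt_def) rfl rfl
  rw [h1]
  rw [Finset.sum_ite, Finset.sum_const_zero, add_zero]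
  have hf : (Finset.range N).filter (fun n => (b : ℕ) ≤ n ∧ n < (a : ℕ))
      = Finset.Ico (b : ℕ) (a : ℕ) := by
    ext n
    simp only [Finset.mem_filter, Finset.mem_range, Finset.mem_Ico]
    have := a.isLt
    omega
  rw [hf]
  have ha : (a : ℕ) ≤ N - 1 := by have := a.isLt; omega
  exact keyNat q hq N a ha b (by exact_mod_cast h.le)

set_option maxHeartbeats 1000000 in
lemma part1 {K : Type*} [Field K] (q : K) (hq : q ≠ 0) (N : ℕ)
    {A : Type*} [Ring A] [Algebra K A] (X : Matrix (Fin N) (Fin N) A) :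
    Trq1A q N (RhA q N A * Mat2 X * RhInvA q N A) = TrqA q N X • (1 : Matrix (Fin N) (Fin N) A) := by
  ext a b
  rw [Trq1A]
  simp only [Matrix.of_apply, Matrix.smul_apply, Matrix.one_apply, smul_eq_mul]
  simp only [middle1 q hq N X, ← Algebra.smul_def, smul_add, Finset.sum_add_distrib]
  rcases lt_trichotomy a b with hab | rfl | hab
  · have hne : a ≠ b := ne_of_lt hab
    have h2 : ¬ b ≤ a := not_le.mpr hab
    have h3 : ¬ b < a := not_lt.2 hab.le
    have h4 : ∀ i : Fin N, ¬(b ≤ i ∧ i < a) := by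
      intro i ⟨h1', h2'⟩; exact absurd (h1'.trans_lt h2') h3
    simp [hne, h2, h3, h4]
  · have h3 : ¬ a < a := lt_irrefl a
    have h4 : ∀ i : Fin N, ¬(a ≤ i ∧ i < a) := by
      intro i ⟨h1', h2'⟩; exact absurd (h1'.trans_lt h2') h3
    simp only [eq_self_iff_true, ite_true, if_pos rfl, le_refl, and_true, h3, and_false, if_false, h4,
      smul_zero, Finset.sum_const_zero, add_zero, mul_one]
    have helper : ∀ i : Fin N, (q ^ (2 * (N - 1 - (i : ℕ)) + 1)) •
          ((1 + (q - q⁻¹) * q * (if i = a then 1 else 0)) • X i i)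
        = (q ^ (2 * (N - 1 - (i : ℕ)) + 1)) • X i i
          + (if i = a then ((q - q⁻¹) * q) • ((q ^ (2 * (N - 1 - (i : ℕ)) + 1)) • X i i) else 0) := by
      intro i
      split_ifs with h
      · match_scalars <;> ring
      · simp
    rw [Finset.sum_congr rfl (fun i _ => helper i)]
    have helper2 : ∀ i : Fin N, (q ^ (2 * (N - 1 - (i : ℕ)) + 1)) •
          (if i = a then -((q * (q - q⁻¹)) • X a a) else 0)
        = (if i = a then (q ^ (2 * (N - 1 - (i : ℕ)) + 1)) • -((q * (q - q⁻¹)) • X a a) else 0) := by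
      intro i; split_ifs <;> simp
    rw [Finset.sum_congr rfl (fun i _ => helper2 i)]
    rw [Finset.sum_add_distrib, Finset.sum_ite_eq' Finset.univ a, Finset.sum_ite_eq' Finset.univ a]
    simp only [Finset.mem_univ, if_true]
    rw [TrqA]
    simp only [← Algebra.smul_def]
    module
  · have hne : a ≠ b := (ne_of_lt hab).symm
    have h2 : b ≤ a := hab.le
    simp only [hne, if_false, h2, and_true, hab, smul_zero, Finset.sum_const_zero, zero_add,
      mul_zero]
    have helper2 : ∀ i : Fin N, (q ^ (2 * (N - 1 - (i : ℕ)) + 1)) •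
          (if i = a then -((q * (q - q⁻¹)) • X a b) else 0)
        = (if i = a then (q ^ (2 * (N - 1 - (i : ℕ)) + 1)) • -((q * (q - q⁻¹)) • X a b) else 0) := by
      intro i; split_ifs <;> simp
    have helper3 : ∀ i : Fin N, (q ^ (2 * (N - 1 - (i : ℕ)) + 1)) •
          (if i = b then (q * (q - q⁻¹)) • X a b else 0)
        = (if i = b then (q ^ (2 * (N - 1 - (i : ℕ)) + 1)) • ((q * (q - q⁻¹)) • X a b) else 0) := by
      intro i; split_ifs <;> simp
    have helper4 : ∀ i : Fin N, (q ^ (2 * (N - 1 - (i : ℕ)) + 1)) •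
          (if b ≤ i ∧ i < a then -(((q - q⁻¹) * (q - q⁻¹)) • X a b) else 0)
        = (if b ≤ i ∧ i < a then (q ^ (2 * (N - 1 - (i : ℕ)) + 1)) else 0)
            • -(((q - q⁻¹) * (q - q⁻¹)) • X a b) := by
      intro i; split_ifs <;> simp
    rw [Finset.sum_congr rfl (fun i _ => helper2 i), Finset.sum_congr rfl (fun i _ => helper3 i),
      Finset.sum_congr rfl (fun i _ => helper4 i), ← Finset.sum_smul,
      Finset.sum_ite_eq' Finset.univ a, Finset.sum_ite_eq' Finset.univ b]
    simp only [Finset.mem_univ, if_true]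
    have hkey := keyFin q hq N a b hab
    set s := ∑ i : Fin N, (if b ≤ i ∧ i < a then q ^ (2 * (N - 1 - (i : ℕ)) + 1) else 0) with hs
    match_scalars
    linear_combination (-(q - q⁻¹)) * hkey

set_option maxHeartbeats 1000000 in
lemma part2 {K : Type*} [Field K] (q : K) (hq : q ≠ 0) (N : ℕ)
    {A : Type*} [Ring A] [Algebra K A] (X : Matrix (Fin N) (Fin N) A) :
    Trq1A q N (RhInvA q N A * Mat2 X * RhA q N A) = TrqA q N X • (1 : Matrix (Fin N) (Fin N) A) := by
  ext a b
  rw [Trq1A]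
  simp only [Matrix.of_apply, Matrix.smul_apply, Matrix.one_apply, smul_eq_mul]
  simp only [middle2 q hq N X, ← Algebra.smul_def, smul_add, Finset.sum_add_distrib]
  rcases lt_trichotomy a b with hab | rfl | hab
  · have hne : a ≠ b := ne_of_lt hab
    have h2 : a ≤ b := hab.le
    simp only [hne, if_false, h2, and_true, hab, smul_zero, Finset.sum_const_zero, zero_add,
      mul_zero]
    have helper2 : ∀ i : Fin N, (q ^ (2 * (N - 1 - (i : ℕ)) + 1)) •
          (if i = a then (q * (q - q⁻¹)) • X a b else 0)
        = (if i = a then (q ^ (2 * (N - 1 - (i : ℕ)) + 1)) • ((q * (q - q⁻¹)) • X a b) else 0) := by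
      intro i; split_ifs <;> simp
    have helper3 : ∀ i : Fin N, (q ^ (2 * (N - 1 - (i : ℕ)) + 1)) •
          (if i = b then -((q * (q - q⁻¹)) • X a b) else 0)
        = (if i = b then (q ^ (2 * (N - 1 - (i : ℕ)) + 1)) • -((q * (q - q⁻¹)) • X a b) else 0) := by
      intro i; split_ifs <;> simp
    have helper4 : ∀ i : Fin N, (q ^ (2 * (N - 1 - (i : ℕ)) + 1)) •
          (if a ≤ i ∧ i < b then -(((q - q⁻¹) * (q - q⁻¹)) • X a b) else 0)
        = (if a ≤ i ∧ i < b then (q ^ (2 * (N - 1 - (i : ℕ)) + 1)) else 0)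
            • -(((q - q⁻¹) * (q - q⁻¹)) • X a b) := by
      intro i; split_ifs <;> simp
    rw [Finset.sum_congr rfl (fun i _ => helper2 i), Finset.sum_congr rfl (fun i _ => helper3 i),
      Finset.sum_congr rfl (fun i _ => helper4 i), ← Finset.sum_smul,
      Finset.sum_ite_eq' Finset.univ a, Finset.sum_ite_eq' Finset.univ b]
    simp only [Finset.mem_univ, if_true]
    have hkey := keyFin q hq N b a hab
    set s := ∑ i : Fin N, (if a ≤ i ∧ i < b then q ^ (2 * (N - 1 - (i : ℕ)) + 1) else 0) with hs
    match_scalars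
    linear_combination (-(q - q⁻¹)) * hkey
  · have h3 : ¬ a < a := lt_irrefl a
    have h4 : ∀ i : Fin N, ¬(a ≤ i ∧ i < a) := by
      intro i ⟨h1', h2'⟩; exact absurd (h1'.trans_lt h2') h3
    simp only [eq_self_iff_true, ite_true, if_pos rfl, le_refl, and_true, h3, and_false, if_false,
      h4, smul_zero, Finset.sum_const_zero, add_zero, zero_add, mul_one]
    have helper : ∀ i : Fin N, (q ^ (2 * (N - 1 - (i : ℕ)) + 1)) •
          ((1 + (q - q⁻¹) * q * (if i = a then 1 else 0)) • X i i)
        = (q ^ (2 * (N - 1 - (i : ℕ)) + 1)) • X i i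
          + (if i = a then ((q - q⁻¹) * q) • ((q ^ (2 * (N - 1 - (i : ℕ)) + 1)) • X i i) else 0) := by
      intro i
      split_ifs with h
      · match_scalars <;> ring
      · simp
    rw [Finset.sum_congr rfl (fun i _ => helper i)]
    have helper2 : ∀ i : Fin N, (q ^ (2 * (N - 1 - (i : ℕ)) + 1)) •
          (if i = a then -((q * (q - q⁻¹)) • X a a) else 0)
        = (if i = a then (q ^ (2 * (N - 1 - (i : ℕ)) + 1)) • -((q * (q - q⁻¹)) • X a a) else 0) := by
      intro i; split_ifs <;> simp
    rw [Finset.sum_congr rfl (fun i _ => helper2 i)]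
    rw [Finset.sum_add_distrib, Finset.sum_ite_eq' Finset.univ a, Finset.sum_ite_eq' Finset.univ a]
    simp only [Finset.mem_univ, if_true]
    rw [TrqA]
    simp only [← Algebra.smul_def]
    module
  · have hne : a ≠ b := (ne_of_lt hab).symm
    have h2 : ¬ a ≤ b := not_le.mpr hab
    have h3 : ¬ a < b := not_lt.2 hab.le
    have h4 : ∀ i : Fin N, ¬(a ≤ i ∧ i < b) := by
      intro i ⟨h1', h2'⟩; exact absurd (h1'.trans_lt h2') h3
    simp [hne, h2, h3, h4]


/-- invariance of the quantum trace: for any unital associative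
`K`-algebra `A` and `X ∈ M_N(A)`,
`Tr_{q1}(R̂ X₂ R̂⁻¹) = Tr_q(X)·Id_N` and `Tr_{q1}(R̂⁻¹ X₂ R̂) = Tr_q(X)·Id_N`. -/
theorem quantum_trace_invariance {K : Type*} [Field K] (q : K) (hq : q ≠ 0)
    (hl : q - q⁻¹ ≠ 0) (N : ℕ) (hN : 1 ≤ N)
    (A : Type*) [Ring A] [Algebra K A] (X : Matrix (Fin N) (Fin N) A) :
    Trq1A q N (RhA q N A * Mat2 X * RhInvA q N A) = TrqA q N X • (1 : Matrix (Fin N) (Fin N) A) ∧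
    Trq1A q N (RhInvA q N A * Mat2 X * RhA q N A) = TrqA q N X • (1 : Matrix (Fin N) (Fin N) A) := by
  exact ⟨part1 q hq N X, part2 q hq N X⟩

end
end

section
/- Under the GL_q(N) differential-algebra relations, the matrix Θ := ω L W⁻¹ (with W = 1 + λωJ invertible) satisfies: (i) R̂ Θ₂ R̂⁻¹ ω₂ = −ω₂ R̂⁻¹ Θ₂ R̂; (ii) R̂ Θ₂ R̂⁻¹ Θ₂ = −Θ₂ R̂⁻¹ Θ₂ R̂⁻¹; (iii) R̂⁻¹ Θ₂ R̂ L₂ = L₂ R̂ Θ₂ R̂⁻¹ and Θ₁ T₂ = T₂ R̂⁻¹ Θ₂ R̂; (iv) J₂ R̂ Θ₂ R̂⁻¹ + R̂⁻¹ Θ₂ R̂ J₂ = −L₂ (W⁻¹)₂ R̂⁻¹ W₂. -/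
open scoped BigOperators

noncomputable section

section Core
variable {M : Type*} [Ring M]

theorem glq_core (R S a l j w w' Λ : M)
    (hcomm : ∀ x : M, Λ * x = x * Λ)
    (hRS : R * S = 1) (hSR : S * R = 1) (hS : S = R - Λ)
    (ha : a*S*a*R = -(S*a*S*a))
    (hb : a*R*l*R = R*l*R*a)
    (hc : a*R*j*R + R*j*R*a = -R)
    (hd : l*R*l*R = R*l*R*l)
    (he : j*R*l*R = R*l*R*j)
    (hf : j*R*j*R = -(S*j*R*j))
    (hw : w = 1 + Λ*(a*j))
    (hww' : w*w' = 1) (hw'w : w'*w = 1) :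
    (R*(a*l*w')*S*a = -(a*S*(a*l*w')*R)) ∧
    (R*(a*l*w')*S*(a*l*w') = -((a*l*w')*S*(a*l*w')*S)) ∧
    (S*(a*l*w')*R*l = l*R*(a*l*w')*S) ∧
    (j*R*(a*l*w')*S + S*(a*l*w')*R*j = -(l*w'*S*w)) := by
  have h1 : ∀ x : M, R*(S*x) = x := fun x => by rw [← mul_assoc, hRS, one_mul]
  have h2 : ∀ x : M, S*(R*x) = x := fun x => by rw [← mul_assoc, hSR, one_mul]
  have hww : ∀ x : M, w*(w'*x) = x := fun x => by rw [← mul_assoc, hww', one_mul]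
  have hw'w2 : ∀ x : M, w'*(w*x) = x := fun x => by rw [← mul_assoc, hw'w, one_mul]
  have hmid : ∀ x y : M, x*(Λ*y) = Λ*(x*y) := fun x y => by
    rw [← mul_assoc, ← hcomm, mul_assoc]
  have ha' : ∀ x : M, a*(S*(a*(R*x))) = -(S*(a*(S*(a*x)))) := fun x => by
    simpa only [mul_assoc, neg_mul] using congrArg (· * x) ha
  have hb' : ∀ x : M, a*(R*(l*(R*x))) = R*(l*(R*(a*x))) := fun x => by
    simpa only [mul_assoc] using congrArg (· * x) hb
  have hd' : ∀ x : M, l*(R*(l*(R*x))) = R*(l*(R*(l*x))) := fun x => by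
    simpa only [mul_assoc] using congrArg (· * x) hd
  have he' : ∀ x : M, j*(R*(l*(R*x))) = R*(l*(R*(j*x))) := fun x => by
    simpa only [mul_assoc] using congrArg (· * x) he
  have hf' : ∀ x : M, j*(R*(j*(R*x))) = -(S*(j*(R*(j*x)))) := fun x => by
    simpa only [mul_assoc, neg_mul] using congrArg (· * x) hf
  have hc' : ∀ x : M, a*(R*(j*(R*x))) + R*(j*(R*(a*x))) = -(R*x) := fun x => by
    simpa only [mul_assoc, add_mul, neg_mul] using congrArg (· * x) hc
  have hc1' : ∀ x : M, R*(j*(R*(a*x))) = -(R*x) - a*(R*(j*(R*x))) := fun x =>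
    eq_sub_of_add_eq (by rw [add_comm]; exact hc' x)
  have hc2 : ∀ x : M, j*(R*(a*(S*x))) = -(S*x) - S*(a*(R*(j*x))) := by
    intro x
    have h := congrArg (fun y : M => S*(y*(S*x))) hc
    simp only [add_mul, neg_mul, mul_add, mul_neg, mul_assoc, h1, h2] at h
    rw [add_comm] at h
    exact eq_sub_of_add_eq h
  have hc3 : ∀ x : M, j*(R*(a*x)) = -x - S*(a*(R*(j*(R*x)))) := fun x => by
    simpa only [h1, h2] using hc2 (R*x)
  have hfb : ∀ x : M, R*(j*(R*(j*(R*x)))) = -(j*(R*(j*x))) := fun x => by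
    have h := congrArg (R * ·) (hf' x)
    simpa only [mul_neg, h1] using h
  have hfa : ∀ x : M, R*(j*(R*(j*x))) = -(j*(R*(j*(S*x)))) := fun x => by
    simpa only [h1] using hfb (S*x)
  have hfb0 : R*(j*(R*(j*R))) = -(j*(R*j)) := by
    have h := congrArg (R * ·) hf
    simp only [mul_assoc, mul_neg] at h
    rwa [h1 (j*(R*j))] at h
  have haR : ∀ x : M, R*(a*(S*(a*x))) = -(a*(S*(a*(S*x)))) := by
    intro x
    have h := ha' (S*x)
    simp only [h1] at h
    have h' := congrArg (R * ·) h
    simpa only [mul_neg, h1] using h'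
  have hba : ∀ x : M, l*(R*(a*x)) = S*(a*(R*(l*(R*x)))) := fun x => by
    have h := congrArg (S * ·) (hb' x).symm
    simpa only [h2] using h
  have hjRl : ∀ x : M, j*(R*(l*x)) = R*(l*(R*(j*(S*x)))) := fun x => by
    simpa only [h1] using he' (S*x)
  have hRR : R*R = Λ*R + 1 := by
    have h : R * (R - Λ) = 1 := by rw [← hS]; exact hRS
    rw [mul_sub] at h
    have h' := eq_add_of_sub_eq h
    rw [← hcomm] at h'
    rw [h']; abel
  have hRR' : ∀ x : M, R*(R*x) = Λ*(R*x) + x := fun x => by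
    simpa only [mul_assoc, add_mul, one_mul] using congrArg (· * x) hRR
  have hRexp : ∀ y : M, R*y = S*y + Λ*y := fun y => by
    rw [hS, sub_mul]; abel
  -- ω-W exchange
  have hA : ∀ x : M, w*(R*(a*(S*x))) = S*(a*(S*(w*x))) := by
    intro x
    rw [hw]
    simp only [add_mul, one_mul, mul_add, mul_one, mul_assoc, hmid]
    rw [hc2 x]
    simp only [mul_sub, mul_neg, mul_assoc]
    rw [ha' (j*x)]
    simp only [mul_neg]
    rw [hRexp (a*(S*x))]
    abel
  have hA' : ∀ x : M, w'*(S*(a*x)) = R*(a*(S*(w'*(R*x)))) := fun x => by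
    have h := hA (w'*(R*x))
    simp only [hww, h2] at h
    have h' := congrArg (w' * ·) h.symm
    simpa only [hw'w2] using h'
  have hA'0 : w'*(S*a) = R*(a*(S*(w'*R))) := by
    simpa only [mul_one] using hA' 1
  -- J-W exchange
  have hJ : ∀ x : M, R*(j*(R*(w*x))) = w*(R*(j*(S*x))) := by
    intro x
    rw [hw]
    simp only [add_mul, one_mul, mul_add, mul_one, mul_assoc, hmid]
    rw [hc1' (j*x), hfa x]
    simp only [mul_neg, mul_sub, sub_neg_eq_add]
    have hq2 : R*(j*(S*x)) = R*(j*(R*x)) - Λ*(R*(j*x)) := by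
      have hsx : S*x = R*x - Λ*x := by rw [hS, sub_mul]
      rw [hsx]
      simp only [mul_sub, hmid]
    rw [hq2]
    simp only [mul_add, mul_sub, mul_neg, hmid]
    abel
  have hJa : ∀ x : M, w'*(R*(j*(R*x))) = R*(j*(S*(w'*x))) := by
    intro x
    have h := hJ (w'*x)
    simp only [hww] at h
    have h' := congrArg (w' * ·) h
    simpa only [hw'w2] using h'
  have hJ' : ∀ x : M, j*(S*(w'*x)) = S*(w'*(R*(j*(R*x)))) := by
    intro x
    have h := congrArg (S * ·) (hJa x)
    simp only [h2] at h
    exact h.symm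
  have hJ'0 : j*(S*(w'*S)) = S*(w'*(R*j)) := by
    have h := hJ' S
    rwa [hRS, mul_one] at h
  have hwL : ∀ x : M, w*(R*(l*(R*x))) = R*(l*(R*(w*x))) := by
    intro x
    rw [hw]
    simp only [add_mul, one_mul, mul_add, mul_one, mul_assoc, hmid]
    rw [he' x, hb' (j*x)]
  have hw'L : ∀ x : M, w'*(R*(l*(R*x))) = R*(l*(R*(w'*x))) := by
    intro x
    have h := hwL (w'*x)
    simp only [hww] at h
    have h' := congrArg (w' * ·) h
    simpa only [hw'w2] using h'.symm
  have hw'Rl : ∀ x : M, w'*(R*(l*x)) = R*(l*(R*(w'*(S*x)))) := fun x => by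
    simpa only [h1] using hw'L (S*x)
  have hw'Rl0 : w'*(R*l) = R*(l*(R*(w'*S))) := by
    have h := hw'L S
    rwa [hRS, mul_one] at h
  have hbraid : w*(R*(w*R)) = R*(w*(R*w)) := by
    rw [hw]
    simp only [add_mul, one_mul, mul_add, mul_one, mul_assoc, hmid]
    rw [hRR, hRR' (a*j)]
    rw [hc3 (j*R), hc3 j]
    rw [hfb0]
    have hx : R*(a*(S*(a*(R*(j*(R*j)))))) = -(a*(S*(a*(j*(R*j))))) := by
      have h := haR (R*(j*(R*j)))
      rwa [h2 (j*(R*j))] at h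
    simp only [mul_add, mul_sub, mul_neg, mul_one, add_mul, sub_mul, neg_mul, one_mul, mul_assoc, hmid]
    rw [hx]
    simp only [mul_neg, hmid]
    abel
  have e3 : (R*(w*(R*w))) * (w'*(S*(w'*S))) = 1 := by
    simp only [mul_assoc, hww, h1, hRS]
  have e2' : (S*(w'*(S*w'))) * (w*(R*(w*R))) = 1 := by
    simp only [mul_assoc, hw'w2, h2, hSR]
  have hD7 : S*(w'*(S*w')) = w'*(S*(w'*S)) := by
    calc S*(w'*(S*w')) = (S*(w'*(S*w')) * (R*(w*(R*w)))) * (w'*(S*(w'*S))) := by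
          rw [mul_assoc, e3, mul_one]
    _ = (S*(w'*(S*w')) * (w*(R*(w*R)))) * (w'*(S*(w'*S))) := by rw [← hbraid]
    _ = w'*(S*(w'*S)) := by rw [e2', one_mul]
  refine ⟨?_, ?_, ?_, ?_⟩
  · -- G1
    simp only [mul_assoc]
    rw [hA'0]
    rw [hba (S*(w'*R))]
    rw [h1 (w'*R)]
    rw [haR (R*(l*(w'*R)))]
    rw [h2 (l*(w'*R))]
  · -- G2
    simp only [mul_assoc]
    conv_lhs => rw [hA' (l*w')]
    conv_lhs => rw [hw'Rl w']
    conv_lhs => rw [hba (S*(R*(l*(R*(w'*(S*w'))))))]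
    conv_lhs => rw [h1 (R*(l*(R*(w'*(S*w')))))]
    conv_lhs => rw [hd' (w'*(S*w'))]
    conv_lhs => rw [haR (R*(R*(l*(R*(l*(w'*(S*w')))))))]
    conv_lhs => rw [h2 (R*(l*(R*(l*(w'*(S*w'))))))]
    conv_rhs => rw [hA' (l*(w'*S))]
    conv_rhs => rw [hw'Rl (w'*S)]
    conv_rhs => rw [← hD7]
    conv_rhs => rw [h1 (w'*(S*w'))]
    conv_rhs => rw [hba (S*(R*(l*(w'*(S*w')))))]
    conv_rhs => rw [h1 (R*(l*(w'*(S*w'))))]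
  · -- G3
    simp only [mul_assoc]
    rw [hw'Rl0]
    rw [hd' (w'*S)]
    rw [hb' (l*(w'*S))]
    rw [h2 (l*(R*(a*(l*(w'*S)))))]
  · -- G5
    simp only [mul_assoc]
    have key1 : S*(a*(R*(l*(w'*(R*j))))) = l*(w'*(S*(a*j))) := by
      conv_rhs => rw [hA' j]
      conv_rhs => rw [hba (S*(w'*(R*j)))]
      conv_rhs => rw [h1 (w'*(R*j))]
    rw [hc3 (l*(w'*S))]
    rw [hjRl (w'*S)]
    rw [hJ'0]
    rw [h1 (w'*(R*j))]
    rw [hRR' (l*(w'*(R*j)))]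
    simp only [mul_add, hmid]
    rw [key1]
    rw [hw]
    simp only [mul_add, mul_one, hmid]
    abel


theorem glq_core_T (R S a l j w w' Λ a1 l1 j1 w1' W1 t : M)
    (hcomm : ∀ x : M, Λ * x = x * Λ)
    (hRS : R * S = 1) (hSR : S * R = 1)
    (hw : w = 1 + Λ*(a*j))
    (hww' : w*w' = 1)
    (hA1 : a1*t = t*S*a*S)
    (hJ1 : j1*t = t*R*j*R)
    (hL1 : l1*t = t*R*l*R)
    (hw1 : W1 = 1 + Λ*(a1*j1))
    (hw1inv : w1'*W1 = 1) :
    a1*l1*w1'*t = t*S*(a*l*w')*R := by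
  have h1 : ∀ x : M, R*(S*x) = x := fun x => by rw [← mul_assoc, hRS, one_mul]
  have h2 : ∀ x : M, S*(R*x) = x := fun x => by rw [← mul_assoc, hSR, one_mul]
  have hww : ∀ x : M, w*(w'*x) = x := fun x => by rw [← mul_assoc, hww', one_mul]
  have hmid : ∀ x y : M, x*(Λ*y) = Λ*(x*y) := fun x y => by
    rw [← mul_assoc, ← hcomm, mul_assoc]
  have hA1' : ∀ x : M, a1*(t*x) = t*(S*(a*(S*x))) := fun x => by
    rw [← mul_assoc, hA1]
    simp only [mul_assoc]
  have hL1' : ∀ x : M, l1*(t*x) = t*(R*(l*(R*x))) := fun x => by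
    rw [← mul_assoc, hL1]
    simp only [mul_assoc]
  have hJ1t : j1*t = t*(R*(j*R)) := by simpa only [mul_assoc] using hJ1
  have hW1t : W1*t = t*(S*(w*R)) := by
    calc W1*t = t + Λ*(a1*(j1*t)) := by
          rw [hw1]; simp only [add_mul, one_mul, mul_assoc]
    _ = t + Λ*(t*(S*(a*(j*R)))) := by rw [hJ1t, hA1' (R*(j*R)), h2 (j*R)]
    _ = t*(S*(w*R)) := by
          rw [hw]
          simp only [add_mul, one_mul, mul_add, mul_one, mul_assoc, hmid, hSR]
  have hSwRinv : (S*(w*R))*(S*(w'*R)) = 1 := by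
    simp only [mul_assoc, h1, hww, hSR]
  have ht : w1'*(W1*t) = t := by rw [← mul_assoc, hw1inv, one_mul]
  have hw1t : w1'*t = t*(S*(w'*R)) := by
    calc w1'*t = w1'*(t*((S*(w*R))*(S*(w'*R)))) := by rw [hSwRinv, mul_one]
    _ = w1'*((W1*t)*(S*(w'*R))) := by rw [← mul_assoc t, ← hW1t]
    _ = t*(S*(w'*R)) := by rw [← mul_assoc w1' (W1*t) (S*(w'*R)), ht]
  simp only [mul_assoc]
  rw [hw1t, hL1' (S*(w'*R)), h1 (w'*R), hA1' (R*(l*(w'*R))), h2 (l*(w'*R))]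

end Core

section MatHom
variable {N : ℕ} {A : Type*} [Ring A]

lemma Mat2_one : Mat2 (1 : Matrix (Fin N) (Fin N) A) = 1 := by
  ext i j
  by_cases h1 : i.1 = j.1 <;> by_cases h2 : i.2 = j.2 <;>
    simp [Mat2, Matrix.one_apply, Prod.ext_iff, h1, h2]

lemma Mat1_one : Mat1 (1 : Matrix (Fin N) (Fin N) A) = 1 := by
  ext i j
  by_cases h1 : i.1 = j.1 <;> by_cases h2 : i.2 = j.2 <;>
    simp [Mat1, Matrix.one_apply, Prod.ext_iff, h1, h2]

lemma Mat2_add (x y : Matrix (Fin N) (Fin N) A) : Mat2 (x + y) = Mat2 x + Mat2 y := by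
  ext i j
  simp only [Mat2, Matrix.of_apply, Matrix.add_apply]
  split_ifs <;> simp

lemma Mat1_add (x y : Matrix (Fin N) (Fin N) A) : Mat1 (x + y) = Mat1 x + Mat1 y := by
  ext i j
  simp only [Mat1, Matrix.of_apply, Matrix.add_apply]
  split_ifs <;> simp

lemma Mat2_smul {K : Type*} [Field K] [Algebra K A] (c : K) (x : Matrix (Fin N) (Fin N) A) :
    Mat2 (c • x) = c • Mat2 x := by
  ext i j
  simp only [Mat2, Matrix.of_apply, Matrix.smul_apply]
  split_ifs <;> simp

lemma Mat1_smul {K : Type*} [Field K] [Algebra K A] (c : K) (x : Matrix (Fin N) (Fin N) A) :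
    Mat1 (c • x) = c • Mat1 x := by
  ext i j
  simp only [Mat1, Matrix.of_apply, Matrix.smul_apply]
  split_ifs <;> simp

lemma Mat2_mul (x y : Matrix (Fin N) (Fin N) A) : Mat2 (x * y) = Mat2 x * Mat2 y := by
  ext i j
  have hterm : ∀ k : Fin N × Fin N, Mat2 x i k * Mat2 y k j
      = if k.1 = i.1 then (if i.1 = j.1 then x i.2 k.2 * y k.2 j.2 else 0) else 0 := by
    intro k
    simp only [Mat2, Matrix.of_apply]
    split_ifs <;> simp_all
  rw [Matrix.mul_apply]
  simp only [hterm]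
  rw [Fintype.sum_prod_type_right]
  simp only [Finset.sum_ite_eq', Finset.mem_univ, if_true]
  by_cases hij : i.1 = j.1 <;> simp [Mat2, hij, Matrix.mul_apply]

lemma Mat1_mul (x y : Matrix (Fin N) (Fin N) A) : Mat1 (x * y) = Mat1 x * Mat1 y := by
  ext i j
  have hterm : ∀ k : Fin N × Fin N, Mat1 x i k * Mat1 y k j
      = if k.2 = i.2 then (if i.2 = j.2 then x i.1 k.1 * y k.1 j.1 else 0) else 0 := by
    intro k
    simp only [Mat1, Matrix.of_apply]
    split_ifs <;> simp_all
  rw [Matrix.mul_apply]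
  simp only [hterm]
  rw [Fintype.sum_prod_type]
  simp only [Finset.sum_ite_eq', Finset.mem_univ, if_true]
  by_cases hij : i.2 = j.2 <;> simp [Mat1, hij, Matrix.mul_apply]

end MatHom

section Hecke
variable {K : Type*} [Field K]

lemma DJRhat_apply (q : K) (N : ℕ) (i j : Fin N × Fin N) :
    DJRhat q N i j = (if j = (i.2, i.1) then (if i.1 = i.2 then q else 1) else 0)
      + (if j = i ∧ i.1 < i.2 then q - q⁻¹ else 0) := by
  obtain ⟨i1, i2⟩ := i
  obtain ⟨j1, j2⟩ := j
  simp only [DJRhat, DJR, Matrix.of_apply, Prod.mk.injEq]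
  congr 1
  · by_cases h1 : j1 = i2 <;> by_cases h2 : j2 = i1 <;> by_cases h3 : i1 = i2 <;>
      simp_all <;> first | ring1 | (intro hx; exact absurd hx.symm (by assumption)) | (exact (if_neg (fun hx => absurd hx.symm (by assumption))).symm)
  · by_cases h1 : j1 = i1 <;> by_cases h2 : j2 = i2 <;> by_cases h3 : i1 < i2 <;>
      simp_all <;> first | ring1 | (intro hx; exact absurd hx.symm (by assumption)) | (exact (if_neg (fun hx => absurd hx.symm (by assumption))).symm)

lemma hecke (q : K) (hq : q ≠ 0) (N : ℕ) :
    DJRhat q N * DJRhat q N = (q - q⁻¹) • DJRhat q N + 1 := by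
  ext i j
  rw [Matrix.mul_apply]
  have h1 : ∀ k, DJRhat q N i k * DJRhat q N k j
      = (if k = (i.2,i.1) then (if i.1 = i.2 then q else 1) * DJRhat q N k j else 0)
        + (if k = i then (if i.1 < i.2 then (q-q⁻¹) * DJRhat q N k j else 0) else 0) := by
    intro k
    rw [DJRhat_apply q N i k, add_mul]
    congr 1
    · split_ifs <;> simp
    · split_ifs <;> simp_all
  obtain ⟨i1, i2⟩ := i
  obtain ⟨j1, j2⟩ := j
  simp only [h1, Finset.sum_add_distrib, Finset.sum_ite_eq', Finset.mem_univ, if_true]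
  simp only [Matrix.add_apply, Matrix.smul_apply, Matrix.one_apply, smul_eq_mul]
  rw [DJRhat_apply q N (i2,i1) (j1,j2), DJRhat_apply q N (i1,i2) (j1,j2)]
  simp only [Prod.mk.injEq]
  have hqq : q⁻¹ * q = 1 := inv_mul_cancel₀ hq
  rcases lt_trichotomy i1 i2 with h|h|h
  · have ha1 : ¬ i2 < i1 := lt_asymm h
    have ha2 : i1 ≠ i2 := ne_of_lt h
    have ha3 : i2 ≠ i1 := ha2.symm
    by_cases e1 : j1 = i1 <;> by_cases e2 : j2 = i2 <;> by_cases e3 : j1 = i2 <;>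
      by_cases e4 : j2 = i1 <;> simp_all [@eq_comm (Fin N)] <;>
      first | ring1 | linear_combination inv_mul_cancel₀ hq | (intro hx; exact absurd hx.symm (by assumption)) | (exact (if_neg (fun hx => absurd hx.symm (by assumption))).symm)
  · subst h
    by_cases e1 : j1 = i1 <;> by_cases e2 : j2 = i1 <;> simp_all [lt_irrefl, @eq_comm (Fin N)] <;>
      first | ring1 | linear_combination inv_mul_cancel₀ hq | (intro hx; exact absurd hx.symm (by assumption)) | (exact (if_neg (fun hx => absurd hx.symm (by assumption))).symm)
  · have ha1 : ¬ i1 < i2 := lt_asymm h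
    have ha2 : i2 ≠ i1 := ne_of_lt h
    have ha3 : i1 ≠ i2 := ha2.symm
    by_cases e1 : j1 = i1 <;> by_cases e2 : j2 = i2 <;> by_cases e3 : j1 = i2 <;>
      by_cases e4 : j2 = i1 <;> simp_all [@eq_comm (Fin N)] <;>
      first | ring1 | linear_combination inv_mul_cancel₀ hq | (intro hx; exact absurd hx.symm (by assumption)) | (exact (if_neg (fun hx => absurd hx.symm (by assumption))).symm)

end Hecke

section Bridge
variable {K : Type*} [Field K]

lemma RhA_mul_RhInvA (q : K) (hq : q ≠ 0) (N : ℕ) (A : Type*) [Ring A] [Algebra K A] :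
    RhA q N A * RhInvA q N A = 1 := by
  have k1 : DJRhat q N * (DJRhat q N - (q - q⁻¹) • 1) = 1 := by
    rw [mul_sub, hecke q hq N, mul_smul_comm, mul_one]; abel
  rw [RhA, RhInvA, ← Matrix.map_mul, k1, Matrix.map_one _ (map_zero _) (map_one _)]

lemma RhInvA_mul_RhA (q : K) (hq : q ≠ 0) (N : ℕ) (A : Type*) [Ring A] [Algebra K A] :
    RhInvA q N A * RhA q N A = 1 := by
  have k2 : (DJRhat q N - (q - q⁻¹) • 1) * DJRhat q N = 1 := by
    rw [sub_mul, hecke q hq N, smul_mul_assoc, one_mul]; abel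
  rw [RhA, RhInvA, ← Matrix.map_mul, k2, Matrix.map_one _ (map_zero _) (map_one _)]

lemma RhInvA_eq (q : K) (N : ℕ) (A : Type*) [Ring A] [Algebra K A] :
    RhInvA q N A = RhA q N A
      - algebraMap K (Matrix (Fin N × Fin N) (Fin N × Fin N) A) (q - q⁻¹) := by
  ext i j
  simp only [RhInvA, RhA, Matrix.map_apply, Matrix.sub_apply, Matrix.smul_apply,
    Matrix.one_apply, Matrix.algebraMap_matrix_apply]
  split_ifs <;> simp [smul_eq_mul, map_sub]

end Bridge

/-- properties of `Θ := ω L W⁻¹` (with `W = 1 + λωJ`) in the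
`GL_q(N)` differential algebra. -/
theorem Theta_relations
    {K : Type*} [Field K] (q : K) (hq : q ≠ 0) (hl : q - q⁻¹ ≠ 0)
    (N : ℕ) (hN : 1 ≤ N) {A : Type*} [Ring A] [Algebra K A]
    (ω L J T : Matrix (Fin N) (Fin N) A)
    (hrel : GLqRels q N ω L J T)
    (Winv : Matrix (Fin N) (Fin N) A)
    (hW1 : (1 + (q - q⁻¹) • (ω * J)) * Winv = 1)
    (hW2 : Winv * (1 + (q - q⁻¹) • (ω * J)) = 1)
    :
    RhA q N A * Mat2 (ω * L * Winv) * RhInvA q N A * Mat2 ω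
        = -(Mat2 ω * RhInvA q N A * Mat2 (ω * L * Winv) * RhA q N A) ∧
    RhA q N A * Mat2 (ω * L * Winv) * RhInvA q N A * Mat2 (ω * L * Winv)
        = -(Mat2 (ω * L * Winv) * RhInvA q N A * Mat2 (ω * L * Winv) * RhInvA q N A) ∧
    RhInvA q N A * Mat2 (ω * L * Winv) * RhA q N A * Mat2 L
        = Mat2 L * RhA q N A * Mat2 (ω * L * Winv) * RhInvA q N A ∧
    Mat1 (ω * L * Winv) * Mat2 T = Mat2 T * RhInvA q N A * Mat2 (ω * L * Winv) * RhA q N A ∧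
    Mat2 J * RhA q N A * Mat2 (ω * L * Winv) * RhInvA q N A +
        RhInvA q N A * Mat2 (ω * L * Winv) * RhA q N A * Mat2 J
      = -(Mat2 L * Mat2 Winv * RhInvA q N A * Mat2 (1 + (q - q⁻¹) • (ω * J))) := by
  obtain ⟨ra, rb, rc, rd, re, rf, rg, rh, ri, rj⟩ := hrel
  have hcomm : ∀ x : Matrix (Fin N × Fin N) (Fin N × Fin N) A,
      (algebraMap K (Matrix (Fin N × Fin N) (Fin N × Fin N) A) (q - q⁻¹)) * x
        = x * algebraMap K (Matrix (Fin N × Fin N) (Fin N × Fin N) A) (q - q⁻¹) :=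
    fun x => Algebra.commutes _ x
  have hRS := RhA_mul_RhInvA q hq N A
  have hSR := RhInvA_mul_RhA q hq N A
  have hS := RhInvA_eq q N A
  have hwdef : Mat2 (1 + (q - q⁻¹) • (ω*J))
      = 1 + (algebraMap K (Matrix (Fin N × Fin N) (Fin N × Fin N) A) (q - q⁻¹))
          * (Mat2 ω * Mat2 J) := by
    rw [Mat2_add, Mat2_one, Mat2_smul, Mat2_mul, Algebra.smul_def]
  have hww' : Mat2 (1 + (q - q⁻¹) • (ω*J)) * Mat2 Winv = 1 := by
    rw [← Mat2_mul, hW1, Mat2_one]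
  have hw'w : Mat2 Winv * Mat2 (1 + (q - q⁻¹) • (ω*J)) = 1 := by
    rw [← Mat2_mul, hW2, Mat2_one]
  have hM2 : Mat2 (ω * L * Winv) = Mat2 ω * Mat2 L * Mat2 Winv := by
    rw [Mat2_mul, Mat2_mul]
  have core := glq_core (RhA q N A) (RhInvA q N A) (Mat2 ω) (Mat2 L) (Mat2 J)
      (Mat2 (1 + (q - q⁻¹) • (ω*J))) (Mat2 Winv)
      (algebraMap K (Matrix (Fin N × Fin N) (Fin N × Fin N) A) (q - q⁻¹))
      hcomm hRS hSR hS ra rb rc rd re rf hwdef hww' hw'w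
  have hw1def : Mat1 (1 + (q - q⁻¹) • (ω*J))
      = 1 + (algebraMap K (Matrix (Fin N × Fin N) (Fin N × Fin N) A) (q - q⁻¹))
          * (Mat1 ω * Mat1 J) := by
    rw [Mat1_add, Mat1_one, Mat1_smul, Mat1_mul, Algebra.smul_def]
  have hw1inv : Mat1 Winv * Mat1 (1 + (q - q⁻¹) • (ω*J)) = 1 := by
    rw [← Mat1_mul, hW2, Mat1_one]
  have coreT := glq_core_T (RhA q N A) (RhInvA q N A) (Mat2 ω) (Mat2 L) (Mat2 J)
      (Mat2 (1 + (q - q⁻¹) • (ω*J))) (Mat2 Winv)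
      (algebraMap K (Matrix (Fin N × Fin N) (Fin N × Fin N) A) (q - q⁻¹))
      (Mat1 ω) (Mat1 L) (Mat1 J) (Mat1 Winv) (Mat1 (1 + (q - q⁻¹) • (ω*J))) (Mat2 T)
      hcomm hRS hSR hwdef hww' rh ri rj hw1def hw1inv
  have hM1 : Mat1 (ω * L * Winv) = Mat1 ω * Mat1 L * Mat1 Winv := by
    rw [Mat1_mul, Mat1_mul]
  rw [hM2, hM1]
  exact ⟨core.1, core.2.1, core.2.2.1, coreT, core.2.2.2⟩

end
end
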